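/- arXiv:2511.10608 — 9 statements merged into one kernel-verified Lean document; each statement's English description precedes it below -/
import Mathlib

section
/- Let 𝒜 be a union-closed family with universe [n] and length ℓ (one less than the maximum size of a chain in 𝒜). Then |𝒜| ≤ ∑_{i=0}^{ℓ} C(n, i). -/
/-!
For a set `T`, let `U(T)` (`supDisjoint 𝒜 T`) be the union of the members of `𝒜` avoiding `T`;
by union-closedness it is the largest such member, and every `A ∈ 𝒜` equals `U(Aᶜ)`. Choose for
each `A ∈ 𝒜` a set `T` of minimum size with `U(T) = A`; this is an injection of `𝒜` into the
subsets of `[n]`. By minimality, `U` is strictly antitone on the subsets of `T`, so a maximal chain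
of subsets of `T` is mapped to a chain of `|T| + 1` members of `𝒜`, whence `|T| ≤ ℓ`.
-/

open Finset

variable {α : Type*} [DecidableEq α]

theorem Finset.exists_isChain_image_card_eq_of_strictAntiOn {β : Type*} [PartialOrder β]
    [DecidableEq β] {f : Finset α → β} (T : Finset α) (hf : StrictAntiOn f (T.powerset : Set (Finset α))) :
    ∃ 𝒞 ⊆ T.powerset.image f, IsChain (· ≤ ·) (𝒞 : Set β) ∧ #𝒞 = #T + 1 ∧ ∀ C ∈ 𝒞, f T ≤ C := by
  induction T using Finset.induction_on with
  | empty => exact ⟨{f ∅}, by simp, by simp, by simp, by simp⟩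
  | insert t S htS ih =>
    have hS : S ∈ (insert t S).powerset := mem_powerset.2 (subset_insert t S)
    have hlt : f (insert t S) < f S := hf hS (mem_powerset_self _) (ssubset_insert htS)
    obtain ⟨𝒞, h𝒞, hchain, hcard, hbound⟩ :=
      ih (hf.mono (coe_subset.2 (powerset_mono.2 (subset_insert t S))))
    have hnotMem : f (insert t S) ∉ 𝒞 := fun h => (hbound _ h).not_gt hlt
    refine ⟨insert (f (insert t S)) 𝒞, insert_subset (mem_image_of_mem f (mem_powerset_self _))
      (h𝒞.trans (image_subset_image (powerset_mono.2 (subset_insert t S)))), ?_, ?_, ?_⟩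
    · rw [coe_insert]
      exact hchain.insert fun C hC _ => Or.inl (hlt.le.trans (hbound C hC))
    · rw [card_insert_of_notMem hnotMem, card_insert_of_notMem htS, hcard]
    · simp only [mem_insert, forall_eq_or_imp, le_refl, true_and]
      exact fun C hC => hlt.le.trans (hbound C hC)

section SupDisjoint

variable (𝒜 : Finset (Finset α))

def supDisjoint (T : Finset α) : Finset α :=
  (𝒜.filter fun X => Disjoint X T).sup id

variable {𝒜}

theorem disjoint_supDisjoint (T : Finset α) : Disjoint (supDisjoint 𝒜 T) T :=
  Finset.disjoint_sup_left.2 fun _ hX => (mem_filter.1 hX).2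

theorem subset_supDisjoint_iff {X : Finset α} (hX : X ∈ 𝒜) (T : Finset α) :
    X ⊆ supDisjoint 𝒜 T ↔ Disjoint X T :=
  ⟨fun h => (disjoint_supDisjoint T).mono_left h,
    fun h => le_sup (f := id) (mem_filter.2 ⟨hX, h⟩)⟩

theorem supDisjoint_anti {S T : Finset α} (h : S ⊆ T) : supDisjoint 𝒜 T ⊆ supDisjoint 𝒜 S :=
  sup_mono (monotone_filter_right 𝒜 fun _ _ hd => hd.mono_right h)

theorem supDisjoint_mem (huc : ∀ X ∈ 𝒜, ∀ Y ∈ 𝒜, X ∪ Y ∈ 𝒜) {X T : Finset α} (hX : X ∈ 𝒜)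
    (hXT : Disjoint X T) : supDisjoint 𝒜 T ∈ 𝒜 := by
  have hne : (𝒜.filter fun X => Disjoint X T).Nonempty := ⟨X, mem_filter.2 ⟨hX, hXT⟩⟩
  rw [supDisjoint, ← sup'_eq_sup hne]
  exact sup'_mem (𝒜 : Set (Finset α)) huc _ hne id fun _ hY => (mem_filter.1 hY).1

theorem supDisjoint_compl [Fintype α] {A : Finset α} (hA : A ∈ 𝒜) : supDisjoint 𝒜 Aᶜ = A :=
  (disjoint_compl_right_iff.1 (disjoint_supDisjoint Aᶜ)).antisymm
    ((subset_supDisjoint_iff hA Aᶜ).2 disjoint_compl_right)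

theorem supDisjoint_union_congr {S S' : Finset α} (h : supDisjoint 𝒜 S = supDisjoint 𝒜 S')
    (R : Finset α) : supDisjoint 𝒜 (S ∪ R) = supDisjoint 𝒜 (S' ∪ R) := by
  unfold supDisjoint
  congr 1
  refine filter_congr fun X hX => ?_
  rw [disjoint_union_right, disjoint_union_right, ← subset_supDisjoint_iff hX S,
    ← subset_supDisjoint_iff hX S', h]

theorem supDisjoint_strictAntiOn {T : Finset α}
    (hT : ∀ t ∈ T, supDisjoint 𝒜 (T.erase t) ≠ supDisjoint 𝒜 T) :
    StrictAntiOn (supDisjoint 𝒜) (T.powerset : Set (Finset α)) := by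
  intro S hS S' hS' hlt
  rw [mem_coe, mem_powerset] at hS hS'
  refine (supDisjoint_anti hlt.subset).ssubset_of_ne fun heq => ?_
  obtain ⟨t, htS', htS⟩ := exists_of_ssubset hlt
  -- Adding `T \ S'` to both sides turns `heq` into `U(T) = U(S ∪ (T \ S'))`, squeezing `U(T.erase t)`.
  have hunion := supDisjoint_union_congr heq (T \ S')
  rw [union_sdiff_of_subset hS'] at hunion
  have hsub : S ∪ (T \ S') ⊆ T.erase t := by
    intro x
    simp only [mem_union, mem_sdiff, mem_erase]
    grind
  have hle : supDisjoint 𝒜 (T.erase t) ⊆ supDisjoint 𝒜 T := by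
    rw [hunion]
    exact supDisjoint_anti hsub
  exact hT t (hS' htS') ((supDisjoint_anti (erase_subset t T)).antisymm hle).symm

theorem exists_isChain_card_eq_of_supDisjoint (huc : ∀ X ∈ 𝒜, ∀ Y ∈ 𝒜, X ∪ Y ∈ 𝒜)
    {T : Finset α} (hT : ∀ t ∈ T, supDisjoint 𝒜 (T.erase t) ≠ supDisjoint 𝒜 T) {X : Finset α}
    (hX : X ∈ 𝒜) (hXT : Disjoint X T) :
    ∃ 𝒞 ⊆ 𝒜, IsChain (· ⊆ ·) (𝒞 : Set (Finset α)) ∧ #𝒞 = #T + 1 := by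
  obtain ⟨𝒞, h𝒞, hchain, hcard, -⟩ :=
    exists_isChain_image_card_eq_of_strictAntiOn T (supDisjoint_strictAntiOn hT)
  refine ⟨𝒞, fun C hC => ?_, hchain, hcard⟩
  obtain ⟨S, hS, rfl⟩ := mem_image.1 (h𝒞 hC)
  exact supDisjoint_mem huc hX (hXT.mono_right (mem_powerset.1 hS))

theorem exists_supDisjoint_eq_card_le [Fintype α] (huc : ∀ X ∈ 𝒜, ∀ Y ∈ 𝒜, X ∪ Y ∈ 𝒜) {ℓ : ℕ}
    (hmax : ∀ 𝒞 ⊆ 𝒜, IsChain (· ⊆ ·) (𝒞 : Set (Finset α)) → #𝒞 ≤ ℓ + 1)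
    {A : Finset α} (hA : A ∈ 𝒜) : ∃ T, supDisjoint 𝒜 T = A ∧ #T ≤ ℓ := by
  obtain ⟨T, hT, hTmin⟩ := exists_min_image (univ.filter fun T => supDisjoint 𝒜 T = A) card
    ⟨Aᶜ, mem_filter.2 ⟨mem_univ _, supDisjoint_compl hA⟩⟩
  have hTA : supDisjoint 𝒜 T = A := (mem_filter.1 hT).2
  have hminimal : ∀ t ∈ T, supDisjoint 𝒜 (T.erase t) ≠ supDisjoint 𝒜 T := fun t ht heq =>
    (card_erase_lt_of_mem ht).not_ge (hTmin _ (mem_filter.2 ⟨mem_univ _, heq.trans hTA⟩))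
  obtain ⟨𝒞, h𝒞, hchain, hcard⟩ :=
    exists_isChain_card_eq_of_supDisjoint huc hminimal hA (hTA ▸ disjoint_supDisjoint T)
  exact ⟨T, hTA, by have := hmax 𝒞 h𝒞 hchain; omega⟩

end SupDisjoint

theorem union_closed_card_le_general (n ℓ : ℕ) (𝒜 : Finset (Finset (Fin n)))
    (huc : ∀ X ∈ 𝒜, ∀ Y ∈ 𝒜, X ∪ Y ∈ 𝒜)
    (hmax : ∀ 𝒞 ⊆ 𝒜, IsChain (· ⊆ ·) (𝒞 : Set (Finset (Fin n))) → 𝒞.card ≤ ℓ + 1) :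
    𝒜.card ≤ ∑ i ∈ Finset.range (ℓ + 1), n.choose i := by
  choose! g hg hgcard using fun A (hA : A ∈ 𝒜) => exists_supDisjoint_eq_card_le huc hmax hA
  calc #𝒜 ≤ #((range (ℓ + 1)).biUnion fun i => powersetCard i (univ : Finset (Fin n))) := by
        refine card_le_card_of_injOn g (fun A hA => ?_) fun A hA B hB h => ?_
        · simpa [Nat.lt_succ_iff] using hgcard A hA
        · rw [← hg A hA, ← hg B hB, h]
    _ ≤ ∑ i ∈ range (ℓ + 1), n.choose i := by
        refine card_biUnion_le.trans_eq (sum_congr rfl fun i _ => ?_)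
        rw [card_powersetCard, card_univ, Fintype.card_fin]

/-- A union-closed family with universe [n] and length ℓ has at most
∑_{i=0}^{ℓ} C(n,i) members. -/
theorem union_closed_card_le (n ℓ : ℕ) (𝒜 : Finset (Finset (Fin n)))
    (hne : ∃ A ∈ 𝒜, A.Nonempty)
    (huc : ∀ X ∈ 𝒜, ∀ Y ∈ 𝒜, X ∪ Y ∈ 𝒜)
    (huniv : 𝒜.sup id = Finset.univ)
    (hchain : ∃ 𝒞 ⊆ 𝒜, IsChain (· ⊆ ·) (𝒞 : Set (Finset (Fin n))) ∧ 𝒞.card = ℓ + 1)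
    (hmax : ∀ 𝒞 ⊆ 𝒜, IsChain (· ⊆ ·) (𝒞 : Set (Finset (Fin n))) → 𝒞.card ≤ ℓ + 1) :
    𝒜.card ≤ ∑ i ∈ Finset.range (ℓ + 1), n.choose i :=
  union_closed_card_le_general n ℓ 𝒜 huc hmax
end

section
/- Let 𝒜 be a union-closed family with universe [n] and length ℓ. Then |𝒜| = ∑_{i=0}^{ℓ} C(n, i) if and only if 𝒜 equals the family of all subsets of [n] of size at least n − ℓ. -/
/-!
Split a union-closed family `𝒜` with largest member `U` at a point `x ∈ U`. The members
containing `x`, with `x` removed, form a union-closed family on `U \ {x}` with chains no longer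
than those of `𝒜`; the members avoiding `x` form a union-closed family on `U \ {x}` whose chains
are one shorter, since each of them extends by `U`. Induction on `|U|` and Pascal's rule bound
`|𝒜|` by `∑_{i<h} C(|U|, i)`, the number of subsets of `U` in the top `h` layers, where `h` bounds
the number of members of a chain. In the case of equality both halves are extremal, so the first
consists of the top `h` layers of `U \ {x}`; a member avoiding `x` that were too small would then
lie below a chain of `h` large sets containing `x`, all of them in `𝒜`.
-/

open Finset

variable {α : Type*}

/-- The subsets `S ⊆ U` with `|S| ≥ |U| - h + 1`. -/
def topLayers [DecidableEq α] (U : Finset α) (h : ℕ) : Finset (Finset α) :=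
  {S ∈ U.powerset | #U < #S + h}

def ChainCardLE (𝒜 : Finset (Finset α)) (h : ℕ) : Prop :=
  ∀ 𝒞 ⊆ 𝒜, IsChain (· ⊆ ·) (𝒞 : Set (Finset α)) → #𝒞 ≤ h

lemma ChainCardLE.pos {𝒜 : Finset (Finset α)} {h : ℕ} {A : Finset α}
    (hch : ChainCardLE 𝒜 h) (hA : A ∈ 𝒜) : 0 < h := by
  have := hch {A} (singleton_subset_iff.2 hA) (by rw [coe_singleton]; exact .singleton)
  rwa [card_singleton] at this

variable [DecidableEq α] {𝒜 𝒞 : Finset (Finset α)} {U S T : Finset α} {a : α} {h k : ℕ}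

lemma ChainCardLE.card_add_one_le (hch : ChainCardLE 𝒜 h) (h𝒞 : 𝒞 ⊆ 𝒜)
    (hc : IsChain (· ⊆ ·) (𝒞 : Set (Finset α))) (hT : T ∈ 𝒜) (hT𝒞 : T ∉ 𝒞)
    (hcomp : ∀ C ∈ 𝒞, T ⊆ C ∨ C ⊆ T) : #𝒞 + 1 ≤ h := by
  rw [← card_insert_of_notMem hT𝒞]
  refine hch _ (insert_subset hT h𝒞) ?_
  rw [coe_insert]
  exact hc.insert fun C hC _ => hcomp C hC

lemma ChainCardLE.of_monotone {β : Type*} {ℬ : Finset (Finset β)} {f : Finset β → Finset α}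
    (hch : ChainCardLE 𝒜 h) (hf : Monotone f) (hinj : Set.InjOn f ℬ)
    (hmaps : ∀ B ∈ ℬ, f B ∈ 𝒜) : ChainCardLE ℬ h := by
  intro 𝒞 h𝒞 hc
  rw [← card_image_of_injOn (hinj.mono (coe_subset.2 h𝒞))]
  refine hch _ (fun T hT => ?_) ?_
  · obtain ⟨B, hB, rfl⟩ := mem_image.1 hT
    exact hmaps B (h𝒞 hB)
  · rw [coe_image]
    exact hf.isChain_image hc

lemma ChainCardLE.memberSubfamily (hch : ChainCardLE 𝒜 h) (a : α) :
    ChainCardLE (𝒜.memberSubfamily a) h := by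
  refine hch.of_monotone (fun _ _ => insert_subset_insert a) ?_
    fun _ hs => (mem_memberSubfamily.1 hs).1
  intro s hs t ht hst
  rw [← erase_insert (mem_memberSubfamily.1 hs).2, ← erase_insert (mem_memberSubfamily.1 ht).2]
  exact congrArg (erase · a) hst

lemma ChainCardLE.nonMemberSubfamily (hch : ChainCardLE 𝒜 (h + 1)) (hT : T ∈ 𝒜)
    (hsub : ∀ A ∈ 𝒜, A ⊆ T) (haT : a ∈ T) : ChainCardLE (𝒜.nonMemberSubfamily a) h :=
  fun _ h𝒞 hc => Nat.le_of_add_le_add_right <|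
    hch.card_add_one_le (fun _ hC => (mem_nonMemberSubfamily.1 (h𝒞 hC)).1) hc hT
      (fun hT𝒞 => (mem_nonMemberSubfamily.1 (h𝒞 hT𝒞)).2 haT)
      (fun C hC => Or.inr (hsub C (mem_nonMemberSubfamily.1 (h𝒞 hC)).1))

lemma SupClosed.memberSubfamily (h𝒜 : SupClosed (𝒜 : Set (Finset α))) (a : α) :
    SupClosed (𝒜.memberSubfamily a : Set (Finset α)) := by
  intro s hs t ht
  simp only [mem_coe, mem_memberSubfamily] at hs ht ⊢
  refine ⟨?_, by simp [hs.2, ht.2]⟩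
  have := h𝒜 hs.1 ht.1
  rwa [mem_coe, sup_eq_union, ← insert_union_distrib] at this

lemma SupClosed.nonMemberSubfamily (h𝒜 : SupClosed (𝒜 : Set (Finset α))) (a : α) :
    SupClosed (𝒜.nonMemberSubfamily a : Set (Finset α)) := by
  intro s hs t ht
  simp only [mem_coe, mem_nonMemberSubfamily] at hs ht ⊢
  exact ⟨h𝒜 hs.1 ht.1, by simp [hs.2, ht.2]⟩

lemma subset_erase_of_mem_memberSubfamily (hsub : ∀ A ∈ 𝒜, A ⊆ U)
    (hS : S ∈ 𝒜.memberSubfamily a) : S ⊆ U.erase a :=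
  subset_erase.2
    ⟨(subset_insert a S).trans (hsub _ (mem_memberSubfamily.1 hS).1), (mem_memberSubfamily.1 hS).2⟩

lemma subset_erase_of_mem_nonMemberSubfamily (hsub : ∀ A ∈ 𝒜, A ⊆ U)
    (hS : S ∈ 𝒜.nonMemberSubfamily a) : S ⊆ U.erase a :=
  subset_erase.2 ⟨hsub _ (mem_nonMemberSubfamily.1 hS).1, (mem_nonMemberSubfamily.1 hS).2⟩

lemma erase_mem_memberSubfamily_iff (ha : a ∈ S) :
    S.erase a ∈ 𝒜.memberSubfamily a ↔ S ∈ 𝒜 := by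
  simp [mem_memberSubfamily, insert_erase ha]

lemma eq_of_memberSubfamily_eq_of_nonMemberSubfamily_eq {ℬ : Finset (Finset α)}
    (h₁ : 𝒜.memberSubfamily a = ℬ.memberSubfamily a)
    (h₀ : 𝒜.nonMemberSubfamily a = ℬ.nonMemberSubfamily a) : 𝒜 = ℬ := by
  ext S
  by_cases ha : a ∈ S
  · rw [← erase_mem_memberSubfamily_iff ha, h₁, erase_mem_memberSubfamily_iff ha]
  · have h₀S := congrArg (S ∈ ·) h₀
    simpa [mem_nonMemberSubfamily, ha] using h₀S

lemma mem_topLayers : S ∈ topLayers U h ↔ S ⊆ U ∧ #U < #S + h := by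
  simp [topLayers]

lemma memberSubfamily_topLayers (ha : a ∈ U) :
    (topLayers U (k + 1)).memberSubfamily a = topLayers (U.erase a) (k + 1) := by
  ext S
  by_cases haS : a ∈ S
  · simp [mem_memberSubfamily, mem_topLayers, subset_erase, haS]
  · simp only [mem_memberSubfamily, mem_topLayers, insert_subset_iff, ha, true_and,
      card_insert_of_notMem haS, haS, not_false_eq_true, and_true, subset_erase,
      card_erase_of_mem ha, and_congr_right_iff]
    omega

lemma nonMemberSubfamily_topLayers (ha : a ∈ U) :
    (topLayers U (k + 1)).nonMemberSubfamily a = topLayers (U.erase a) k := by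
  have := card_pos.2 ⟨a, ha⟩
  ext S
  simp only [mem_nonMemberSubfamily, mem_topLayers, subset_erase, card_erase_of_mem ha]
  constructor
  · rintro ⟨⟨hSU, hcard⟩, haS⟩
    exact ⟨⟨hSU, haS⟩, by omega⟩
  · rintro ⟨⟨hSU, haS⟩, hcard⟩
    exact ⟨⟨hSU, by omega⟩, haS⟩

lemma card_topLayers_succ (ha : a ∈ U) :
    #(topLayers U (k + 1)) = #(topLayers (U.erase a) (k + 1)) + #(topLayers (U.erase a) k) := by
  rw [← card_memberSubfamily_add_card_nonMemberSubfamily a, memberSubfamily_topLayers ha,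
    nonMemberSubfamily_topLayers ha]

lemma sum_range_choose_succ (m k : ℕ) :
    ∑ i ∈ range (k + 1), (m + 1).choose i =
      ∑ i ∈ range (k + 1), m.choose i + ∑ i ∈ range k, m.choose i := by
  rw [sum_range_succ', sum_range_succ' (m.choose ·)]
  simp only [Nat.choose_succ_succ', sum_add_distrib, Nat.choose_zero_right]
  ring

lemma card_topLayers (U : Finset α) (h : ℕ) :
    #(topLayers U h) = ∑ i ∈ range h, (#U).choose i := by
  induction U using Finset.induction_on generalizing h with
  | empty => cases h <;> simp [topLayers, sum_range_succ']
  | insert a U haU ih =>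
    cases h with
    | zero =>
      simpa [topLayers, filter_eq_empty_iff] using fun S hS => card_le_card hS
    | succ k =>
      rw [card_topLayers_succ (mem_insert_self a U), erase_insert haU, ih, ih,
        card_insert_of_notMem haU, sum_range_choose_succ]

lemma exists_chain_topLayers : ∀ (h : ℕ) {U S : Finset α}, S ⊆ U → #S + h ≤ #U + 1 →
    ∃ 𝒞 ⊆ topLayers U h, IsChain (· ⊆ ·) (𝒞 : Set (Finset α)) ∧ #𝒞 = h ∧ ∀ C ∈ 𝒞, S ⊆ C
  | 0, _, _, _, _ => ⟨∅, empty_subset _, by simp, rfl, by simp⟩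
  | k + 1, U, S, hSU, hcard => by
    obtain rfl | hSU' := hSU.eq_or_ssubset
    · exact ⟨{S}, by simp [mem_topLayers], by simp, by simp; omega, by simp⟩
    obtain ⟨y, hyU, hyS⟩ := exists_of_ssubset hSU'
    obtain ⟨𝒞, h𝒞, hc, h𝒞card, hS𝒞⟩ := exists_chain_topLayers k (subset_erase.2 ⟨hSU, hyS⟩)
      (by rw [card_erase_of_mem hyU]; omega)
    have hCU : ∀ C ∈ 𝒞, C ⊆ U.erase y := fun C hC => (mem_topLayers.1 (h𝒞 hC)).1
    have hU𝒞 : U ∉ 𝒞 := fun hU => notMem_erase y U (hCU U hU hyU)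
    refine ⟨insert U 𝒞, insert_subset ?_ ?_, ?_, by rw [card_insert_of_notMem hU𝒞, h𝒞card], ?_⟩
    · exact mem_topLayers.2 ⟨subset_rfl, by omega⟩
    · intro C hC
      obtain ⟨hCU, hCcard⟩ := mem_topLayers.1 (h𝒞 hC)
      rw [card_erase_of_mem hyU] at hCcard
      exact mem_topLayers.2 ⟨hCU.trans (erase_subset y U), by omega⟩
    · rw [coe_insert]
      exact hc.insert fun C hC _ => Or.inr ((hCU C hC).trans (erase_subset y U))
    · simpa [hSU] using hS𝒞

lemma nonMemberSubfamily_subset_topLayers (ha : a ∈ U) (hsub : ∀ A ∈ 𝒜, A ⊆ U)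
    (hch : ChainCardLE 𝒜 (k + 1))
    (h₁ : 𝒜.memberSubfamily a = (topLayers U (k + 1)).memberSubfamily a) :
    𝒜.nonMemberSubfamily a ⊆ topLayers (U.erase a) k := by
  intro A hA
  have hAU := subset_erase_of_mem_nonMemberSubfamily hsub hA
  obtain ⟨hA𝒜, haA⟩ := mem_nonMemberSubfamily.1 hA
  refine mem_topLayers.2 ⟨hAU, lt_of_not_ge fun hsmall => ?_⟩
  have := card_pos.2 ⟨a, ha⟩
  obtain ⟨𝒞, h𝒞, hc, h𝒞card, hA𝒞⟩ := exists_chain_topLayers (k + 1)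
    (insert_subset ha (hAU.trans (erase_subset a U)))
    (by rw [card_erase_of_mem ha] at hsmall; rw [card_insert_of_notMem haA]; omega)
  have h𝒞𝒜 : 𝒞 ⊆ 𝒜 := fun C hC => by
    have haC : a ∈ C := hA𝒞 C hC (mem_insert_self a A)
    rw [← erase_mem_memberSubfamily_iff haC, h₁, erase_mem_memberSubfamily_iff haC]
    exact h𝒞 hC
  have := hch.card_add_one_le h𝒞𝒜 hc hA𝒜 (fun hA𝒞' => haA (hA𝒞 A hA𝒞' (mem_insert_self a A)))
    (fun C hC => Or.inl ((subset_insert a A).trans (hA𝒞 C hC)))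
  omega

theorem card_le_card_topLayers (h𝒜 : SupClosed (𝒜 : Set (Finset α)))
    (hsub : ∀ A ∈ 𝒜, A ⊆ U) (hch : ChainCardLE 𝒜 h) : #𝒜 ≤ #(topLayers U h) := by
  induction U using Finset.strongInduction generalizing 𝒜 h with
  | H U ih =>
    obtain rfl | hne := 𝒜.eq_empty_or_nonempty
    · simp
    set M := 𝒜.sup id
    have hM : M ∈ 𝒜 := h𝒜.finsetSup_mem hne fun A hA => hA
    have hMtop : ∀ A ∈ 𝒜, A ⊆ M := fun A hA => le_sup (f := id) hA
    obtain ⟨k, rfl⟩ := Nat.exists_eq_add_one.2 (hch.pos hM)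
    obtain hM0 | ⟨x, hxM⟩ := M.eq_empty_or_nonempty
    · calc #𝒜 ≤ #({∅} : Finset (Finset α)) := card_le_card fun A hA => by
            rw [mem_singleton, ← subset_empty, ← hM0]
            exact hMtop A hA
        _ ≤ #(topLayers U (k + 1)) := card_pos.2 ⟨U, mem_topLayers.2 ⟨subset_rfl, by omega⟩⟩
    have hxU : x ∈ U := hsub M hM hxM
    calc #𝒜 = #(𝒜.memberSubfamily x) + #(𝒜.nonMemberSubfamily x) :=
          (card_memberSubfamily_add_card_nonMemberSubfamily x 𝒜).symm
      _ ≤ #(topLayers (U.erase x) (k + 1)) + #(topLayers (U.erase x) k) := add_le_add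
          (ih _ (erase_ssubset hxU) (h𝒜.memberSubfamily x)
            (fun _ => subset_erase_of_mem_memberSubfamily hsub) (hch.memberSubfamily x))
          (ih _ (erase_ssubset hxU) (h𝒜.nonMemberSubfamily x)
            (fun _ => subset_erase_of_mem_nonMemberSubfamily hsub)
            (hch.nonMemberSubfamily hM hMtop hxM))
      _ = #(topLayers U (k + 1)) := (card_topLayers_succ hxU).symm

theorem eq_topLayers_of_card_eq (h𝒜 : SupClosed (𝒜 : Set (Finset α))) (hsup : 𝒜.sup id = U)
    (hch : ChainCardLE 𝒜 h) (hcard : #𝒜 = #(topLayers U h)) : 𝒜 = topLayers U h := by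
  induction U using Finset.strongInduction generalizing 𝒜 h with
  | H U ih =>
    obtain rfl | hne := 𝒜.eq_empty_or_nonempty
    · exact (card_eq_zero.1 hcard.symm).symm
    have hU : U ∈ 𝒜 := hsup ▸ h𝒜.finsetSup_mem hne fun A hA => hA
    have hsub : ∀ A ∈ 𝒜, A ⊆ U := fun A hA => hsup ▸ le_sup (f := id) hA
    obtain ⟨k, rfl⟩ := Nat.exists_eq_add_one.2 (hch.pos hU)
    obtain rfl | ⟨x, hx⟩ := U.eq_empty_or_nonempty
    · rw [eq_singleton_iff_unique_mem.2 ⟨hU, fun A hA => subset_empty.1 (hsub A hA)⟩]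
      simp [topLayers]
    have h₁le := card_le_card_topLayers (h𝒜.memberSubfamily x)
      (fun _ => subset_erase_of_mem_memberSubfamily hsub) (hch.memberSubfamily x)
    have h₀le := card_le_card_topLayers (h𝒜.nonMemberSubfamily x)
      (fun _ => subset_erase_of_mem_nonMemberSubfamily hsub) (hch.nonMemberSubfamily hU hsub hx)
    have hsplit := card_memberSubfamily_add_card_nonMemberSubfamily x 𝒜
    rw [card_topLayers_succ hx] at hcard
    have hsup₁ : (𝒜.memberSubfamily x).sup id = U.erase x :=
      le_antisymm (Finset.sup_le fun _ => subset_erase_of_mem_memberSubfamily hsub)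
        (le_sup (f := id) ((erase_mem_memberSubfamily_iff hx).2 hU))
    have h₁ := ih _ (erase_ssubset hx) (h𝒜.memberSubfamily x) hsup₁ (hch.memberSubfamily x)
      (by omega)
    rw [← memberSubfamily_topLayers hx] at h₁
    have h₀ : 𝒜.nonMemberSubfamily x = topLayers (U.erase x) k :=
      eq_of_subset_of_card_le (nonMemberSubfamily_subset_topLayers hx hsub hch h₁) (by omega)
    exact eq_of_memberSubfamily_eq_of_nonMemberSubfamily_eq h₁
      (h₀.trans (nonMemberSubfamily_topLayers hx).symm)

theorem union_closed_card_eq_iff_general (n ℓ : ℕ) (𝒜 : Finset (Finset (Fin n)))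
    (huc : ∀ X ∈ 𝒜, ∀ Y ∈ 𝒜, X ∪ Y ∈ 𝒜)
    (huniv : 𝒜.sup id = Finset.univ)
    (hmax : ∀ 𝒞 ⊆ 𝒜, IsChain (· ⊆ ·) (𝒞 : Set (Finset (Fin n))) → 𝒞.card ≤ ℓ + 1) :
    𝒜.card = ∑ i ∈ Finset.range (ℓ + 1), n.choose i ↔
      𝒜 = Finset.univ.filter (fun A : Finset (Fin n) => n - ℓ ≤ A.card) := by
  have htop : univ.filter (fun A : Finset (Fin n) => n - ℓ ≤ #A) = topLayers univ (ℓ + 1) := by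
    ext A
    simp only [mem_filter, mem_univ, true_and, mem_topLayers, subset_univ, card_univ,
      Fintype.card_fin]
    omega
  have hcard : #(topLayers (univ : Finset (Fin n)) (ℓ + 1)) = ∑ i ∈ range (ℓ + 1), n.choose i := by
    rw [card_topLayers, card_univ, Fintype.card_fin]
  rw [htop, ← hcard]
  exact ⟨eq_topLayers_of_card_eq (fun X hX Y hY => huc X hX Y hY) huniv hmax,
    fun h => by rw [h]⟩

/-- Equality |𝒜| = ∑_{i=0}^{ℓ} C(n,i) holds iff 𝒜 is the family of all
subsets of [n] of size at least n − ℓ. -/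
theorem union_closed_card_eq_iff (n ℓ : ℕ) (𝒜 : Finset (Finset (Fin n)))
    (hne : ∃ A ∈ 𝒜, A.Nonempty)
    (huc : ∀ X ∈ 𝒜, ∀ Y ∈ 𝒜, X ∪ Y ∈ 𝒜)
    (huniv : 𝒜.sup id = Finset.univ)
    (hchain : ∃ 𝒞 ⊆ 𝒜, IsChain (· ⊆ ·) (𝒞 : Set (Finset (Fin n))) ∧ 𝒞.card = ℓ + 1)
    (hmax : ∀ 𝒞 ⊆ 𝒜, IsChain (· ⊆ ·) (𝒞 : Set (Finset (Fin n))) → 𝒞.card ≤ ℓ + 1) :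
    𝒜.card = ∑ i ∈ Finset.range (ℓ + 1), n.choose i ↔
      𝒜 = Finset.univ.filter (fun A : Finset (Fin n) => n - ℓ ≤ A.card) :=
  union_closed_card_eq_iff_general n ℓ 𝒜 huc huniv hmax
end

section
/- For all integers 0 ≤ k ≤ n and 0 ≤ m ≤ n, the identity ∑_{i=0}^{k} C(n, i) = ∑_{i=0}^{m} C(m, i) · ∑_{j=0}^{k−i} C(n−m, j) holds, where sums over negative upper limits are empty. -/
open Finset

/-- Summing Vandermonde's identity `C(a+b,t) = ∑_{i+j=t} C(a,i) C(b,j)` over `t ≤ k`. -/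
theorem sum_range_choose_add (a b k : ℕ) :
    ∑ t ∈ range (k + 1), (a + b).choose t =
      ∑ i ∈ range (k + 1), a.choose i * ∑ j ∈ range (k + 1 - i), b.choose j := by
  induction k with
  | zero => simp
  | succ k ih =>
    have inner_succ : ∀ i ∈ range (k + 2),
        a.choose i * ∑ j ∈ range (k + 2 - i), b.choose j =
          a.choose i * ∑ j ∈ range (k + 1 - i), b.choose j + a.choose i * b.choose (k + 1 - i) := by
      intro i hi
      rw [show k + 2 - i = k + 1 - i + 1 by grind, sum_range_succ, mul_add]
    rw [sum_range_succ, ih, sum_congr rfl inner_succ, sum_add_distrib, sum_range_succ _ (k + 1),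
      Nat.sub_self, range_zero, sum_empty, mul_zero, add_zero, Nat.add_choose_eq,
      Nat.sum_antidiagonal_eq_sum_range_succ_mk]

theorem partial_binomial_identity_general (n k m : ℕ) (hm : m ≤ n) :
    ∑ i ∈ Finset.range (k + 1), n.choose i =
      ∑ i ∈ Finset.range (m + 1), m.choose i *
        ∑ j ∈ Finset.range (k + 1 - i), (n - m).choose j := by
  set f : ℕ → ℕ := fun i => m.choose i * ∑ j ∈ range (k + 1 - i), (n - m).choose j
  have f_eq_zero_of_gt_k : ∀ i ≥ k + 1, f i = 0 := fun i hi => by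
    simp [f, Nat.sub_eq_zero_of_le hi]
  have f_eq_zero_of_gt_m : ∀ i ≥ m + 1, f i = 0 := fun i hi => by
    simp [f, Nat.choose_eq_zero_of_lt hi]
  calc ∑ i ∈ range (k + 1), n.choose i
      = ∑ i ∈ range (k + 1), f i := by
        rw [← sum_range_choose_add, Nat.add_sub_cancel' hm]
    _ = ∑ i ∈ range (m + k + 1), f i := (eventually_constant_sum f_eq_zero_of_gt_k (by omega)).symm
    _ = ∑ i ∈ range (m + 1), f i := eventually_constant_sum f_eq_zero_of_gt_m (by omega)

/-- Vandermonde-type identity for partial sums of binomial coefficients: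
∑_{i=0}^{k} C(n,i) = ∑_{i=0}^{m} C(m,i) ∑_{j=0}^{k−i} C(n−m,j),
where the inner sum is empty when k − i < 0. -/
theorem partial_binomial_identity (n k m : ℕ) (hk : k ≤ n) (hm : m ≤ n) :
    ∑ i ∈ Finset.range (k + 1), n.choose i =
      ∑ i ∈ Finset.range (m + 1), m.choose i *
        ∑ j ∈ Finset.range (k + 1 - i), (n - m).choose j :=
  partial_binomial_identity_general n k m hm
end

section
/- Let 𝒜 be union-closed with universe [n] and maximum chain [n] = C₁ ⊋ ⋯ ⊋ C_{ℓ+1}. For i ∈ [ℓ], define 𝒞ᵢ = {X ∈ 𝒜 : Cᵢ \ C_{i+1} ⊆ X and X ∩ (⋃_{j<i} (C_j \ C_{j+1})) = ∅} and 𝒟ᵢ = {X \ (Cᵢ \ C_{i+1}) : X ∈ 𝒞ᵢ}. If C_{i+1} ≠ ∅, then 𝒟ᵢ is union-closed (and contains the nonempty set C_{i+1}). -/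
/-!
Both conditions defining `𝒞ᵢ` (containing `Cᵢ \ Cᵢ₊₁`, missing the earlier differences) are
preserved by unions, and `X ↦ X \ S` commutes with unions, so `𝒟ᵢ` inherits union-closedness
from `𝒜`. Since the chain decreases, `Cᵢ` itself lies in `𝒞ᵢ`, and it is sent to `Cᵢ₊₁`.
-/

open Finset

variable {α : Type*} [DecidableEq α]

lemma supClosed_superset_inter_eq_empty (S T : Finset α) :
    SupClosed {X : Finset α | S ⊆ X ∧ X ∩ T = ∅} := by
  rintro X ⟨hSX, hXT⟩ Y ⟨-, hYT⟩
  refine ⟨hSX.trans subset_union_left, ?_⟩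
  rw [sup_eq_union, union_inter_distrib_right, hXT, hYT, union_empty]

lemma SupClosed.image_sdiff {s : Set (Finset α)} (hs : SupClosed s) (S : Finset α) :
    SupClosed ((· \ S) '' s) := by
  rintro _ ⟨X, hX, rfl⟩ _ ⟨Y, hY, rfl⟩
  exact ⟨X ∪ Y, hs hX hY, union_sdiff_distrib X Y S⟩

lemma supClosed_image_sdiff_filter_superset_inter_eq_empty {𝒜 : Finset (Finset α)}
    (h𝒜 : SupClosed (𝒜 : Set (Finset α))) (S T : Finset α) :
    SupClosed ((𝒜.filter (fun X => S ⊆ X ∧ X ∩ T = ∅)).image (· \ S) : Set (Finset α)) := by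
  rw [coe_image, coe_filter]
  exact (h𝒜.inter (supClosed_superset_inter_eq_empty S T)).image_sdiff S

lemma disjoint_biUnion_range_sdiff_succ {C : ℕ → Finset α} {i : ℕ}
    (hC : AntitoneOn C (Set.Iic i)) :
    Disjoint (C i) ((range i).biUnion fun j => C j \ C (j + 1)) := by
  refine (disjoint_biUnion_right _ _ _).2 fun j hj => disjoint_sdiff_self_right.mono_left ?_
  have hj : j + 1 ≤ i := mem_range.1 hj
  exact hC (Set.mem_Iic.2 hj) Set.self_mem_Iic hj

open Finset in
theorem Di_union_closed_general (n ℓ : ℕ) (𝒜 : Finset (Finset (Fin n)))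
    (huc : ∀ X ∈ 𝒜, ∀ Y ∈ 𝒜, X ∪ Y ∈ 𝒜)
    (C : ℕ → Finset (Fin n))
    (hmem : ∀ i ≤ ℓ, C i ∈ 𝒜)
    (hmono : ∀ i j, i < j → j ≤ ℓ → C j ⊂ C i)
    (i : ℕ) (hi : i < ℓ) :
    (∀ X ∈ ((𝒜.filter (fun X => C i \ C (i+1) ⊆ X ∧
          X ∩ (Finset.range i).biUnion (fun j => C j \ C (j+1)) = ∅)).image
            (fun X => X \ (C i \ C (i+1)))),
     ∀ Y ∈ ((𝒜.filter (fun X => C i \ C (i+1) ⊆ X ∧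
          X ∩ (Finset.range i).biUnion (fun j => C j \ C (j+1)) = ∅)).image
            (fun X => X \ (C i \ C (i+1)))),
       X ∪ Y ∈ ((𝒜.filter (fun X => C i \ C (i+1) ⊆ X ∧
          X ∩ (Finset.range i).biUnion (fun j => C j \ C (j+1)) = ∅)).image
            (fun X => X \ (C i \ C (i+1))))) ∧
    C (i + 1) ∈ ((𝒜.filter (fun X => C i \ C (i+1) ⊆ X ∧
          X ∩ (Finset.range i).biUnion (fun j => C j \ C (j+1)) = ∅)).image
            (fun X => X \ (C i \ C (i+1)))) := by
  have hanti : AntitoneOn C (Set.Iic ℓ) :=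
    StrictAntiOn.antitoneOn fun a _ b hb hab => hmono a b hab hb
  have hsupClosed := supClosed_image_sdiff_filter_superset_inter_eq_empty huc
    (C i \ C (i + 1)) ((range i).biUnion fun j => C j \ C (j + 1))
  refine ⟨fun X hX Y hY => hsupClosed hX hY,
    mem_image.2 ⟨C i, mem_filter.2 ⟨hmem i hi.le, sdiff_subset, ?_⟩, ?_⟩⟩
  · exact disjoint_iff_inter_eq_empty.1
      (disjoint_biUnion_range_sdiff_succ (hanti.mono (Set.Iic_subset_Iic.2 hi.le)))
  · exact Finset.sdiff_sdiff_eq_self (hanti (Set.mem_Iic.2 hi.le) (Set.mem_Iic.2 hi) i.le_succ)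

open Finset in
/-- With a maximum chain [n] = C 0 ⊋ ⋯ ⊋ C ℓ in the union-closed family 𝒜,
for i < ℓ let 𝒞ᵢ = {X ∈ 𝒜 : C i \ C (i+1) ⊆ X, X ∩ ⋃_{j<i}(C j \ C (j+1)) = ∅}
and 𝒟ᵢ = {X \ (C i \ C (i+1)) : X ∈ 𝒞ᵢ}.  If C (i+1) ≠ ∅ then 𝒟ᵢ is
union-closed and contains the nonempty set C (i+1).
(Here `C i` plays the role of `C_{i+1}` in the paper.) -/
theorem Di_union_closed (n ℓ : ℕ) (𝒜 : Finset (Finset (Fin n)))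
    (hne : ∃ A ∈ 𝒜, A.Nonempty)
    (huc : ∀ X ∈ 𝒜, ∀ Y ∈ 𝒜, X ∪ Y ∈ 𝒜)
    (huniv : 𝒜.sup id = Finset.univ)
    (C : ℕ → Finset (Fin n))
    (hC0 : C 0 = Finset.univ)
    (hmem : ∀ i ≤ ℓ, C i ∈ 𝒜)
    (hmono : ∀ i j, i < j → j ≤ ℓ → C j ⊂ C i)
    (hmax : ∀ 𝒞 ⊆ 𝒜, IsChain (· ⊆ ·) (𝒞 : Set (Finset (Fin n))) → 𝒞.card ≤ ℓ + 1)
    (i : ℕ) (hi : i < ℓ) (hCne : C (i + 1) ≠ ∅) :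
    (∀ X ∈ ((𝒜.filter (fun X => C i \ C (i+1) ⊆ X ∧
          X ∩ (Finset.range i).biUnion (fun j => C j \ C (j+1)) = ∅)).image
            (fun X => X \ (C i \ C (i+1)))),
     ∀ Y ∈ ((𝒜.filter (fun X => C i \ C (i+1) ⊆ X ∧
          X ∩ (Finset.range i).biUnion (fun j => C j \ C (j+1)) = ∅)).image
            (fun X => X \ (C i \ C (i+1)))),
       X ∪ Y ∈ ((𝒜.filter (fun X => C i \ C (i+1) ⊆ X ∧
          X ∩ (Finset.range i).biUnion (fun j => C j \ C (j+1)) = ∅)).image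
            (fun X => X \ (C i \ C (i+1))))) ∧
    C (i + 1) ∈ ((𝒜.filter (fun X => C i \ C (i+1) ⊆ X ∧
          X ∩ (Finset.range i).biUnion (fun j => C j \ C (j+1)) = ∅)).image
            (fun X => X \ (C i \ C (i+1)))) :=
  Di_union_closed_general n ℓ 𝒜 huc C hmem hmono i hi
end

section
/- Let 𝒜 be union-closed with universe [n] and maximum chain [n] = C₁ ⊋ ⋯ ⊋ C_{ℓ+1}, and define 𝒞ᵢ and 𝒟ᵢ as above. Then 𝒜 \ {C_{ℓ+1}} = ⋃_{i=1}^{ℓ} 𝒞ᵢ, the 𝒞ᵢ are pairwise disjoint, |𝒟ᵢ| = |𝒞ᵢ| for each i, and consequently |𝒜| = 1 + ∑_{i=1}^{ℓ} |𝒟ᵢ|. -/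
/-!
Because the chain has maximum size, a member of `𝒜` comparable with every `C j` is one of the
`C j`: nothing in `𝒜` lies strictly between `C (i + 1)` and `C i`, or below `C ℓ`. Given
`X ∈ 𝒜` other than `C ℓ`, take `i` with `X ⊆ C i` but `X ⊄ C (i + 1)`. Union-closedness puts
`X ∪ C (i + 1)` in `𝒜` between these two, and it is not `C (i + 1)`, so it is `C i`; hence `X`
contains the block `C i \ C (i + 1)` and avoids the earlier blocks, i.e. `X ∈ 𝒞ᵢ`. The classes
are disjoint since the blocks are nonempty, and removing the common block is injective on `𝒞ᵢ`.
-/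

open Finset

theorem Finset.mem_of_isChain_insert_of_card_le {β : Type*} [DecidableEq β] {r : β → β → Prop}
    {𝒜 𝒮 : Finset β} {Y : β} (hmax : ∀ 𝒞 ⊆ 𝒜, IsChain r (𝒞 : Set β) → #𝒞 ≤ #𝒮)
    (hY : Y ∈ 𝒜) (h𝒮 : 𝒮 ⊆ 𝒜) (hchain : IsChain r (insert Y (𝒮 : Set β))) : Y ∈ 𝒮 := by
  by_contra hY𝒮
  have := hmax (insert Y 𝒮) (insert_subset hY h𝒮) (by rwa [coe_insert])
  rw [card_insert_of_notMem hY𝒮] at this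
  omega

theorem Finset.exists_subset_and_not_subset_succ {α : Type*} {X : Finset α} {C : ℕ → Finset α}
    {ℓ : ℕ} (h0 : X ⊆ C 0) (hℓ : ¬X ⊆ C ℓ) : ∃ i < ℓ, X ⊆ C i ∧ ¬X ⊆ C (i + 1) := by
  induction ℓ with
  | zero => exact absurd h0 hℓ
  | succ ℓ ih =>
    by_cases hXℓ : X ⊆ C ℓ
    · exact ⟨ℓ, ℓ.lt_succ_self, hXℓ, hℓ⟩
    · obtain ⟨i, hi, hXCi⟩ := ih hXℓ
      exact ⟨i, hi.trans ℓ.lt_succ_self, hXCi⟩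

theorem Finset.card_image_sdiff_of_forall_subset {α : Type*} [DecidableEq α]
    {𝒮 : Finset (Finset α)} {D : Finset α} (h : ∀ X ∈ 𝒮, D ⊆ X) :
    #(𝒮.image (· \ D)) = #𝒮 :=
  card_image_of_injOn fun X hX Y hY hXY => by
    rw [← sdiff_union_of_subset (h X hX), ← sdiff_union_of_subset (h Y hY)]
    exact congrArg (· ∪ D) hXY

variable {α : Type*}

section chainClass

variable [DecidableEq α] {𝒜 : Finset (Finset α)} {C : ℕ → Finset α} {i j : ℕ} {X : Finset α}

/-- The paper's `𝒞ᵢ`, shifted to start at `i = 0`. -/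
def chainClass (𝒜 : Finset (Finset α)) (C : ℕ → Finset α) (i : ℕ) : Finset (Finset α) :=
  𝒜.filter fun X => C i \ C (i + 1) ⊆ X ∧
    X ∩ (range i).biUnion (fun j => C j \ C (j + 1)) = ∅

theorem mem_chainClass : X ∈ chainClass 𝒜 C i ↔
    X ∈ 𝒜 ∧ C i \ C (i + 1) ⊆ X ∧ ∀ j < i, Disjoint X (C j \ C (j + 1)) := by
  simp [chainClass, ← disjoint_iff_inter_eq_empty, disjoint_biUnion_right]

theorem mem_chainClass_of_subset (hX : X ∈ 𝒜) (hblock : C i \ C (i + 1) ⊆ X) (hXi : X ⊆ C i)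
    (hC : ∀ j < i, C i ⊆ C (j + 1)) : X ∈ chainClass 𝒜 C i :=
  mem_chainClass.mpr ⟨hX, hblock, fun j hj => disjoint_sdiff.mono_left (hXi.trans (hC j hj))⟩

theorem disjoint_chainClass (hij : i < j) (hi : C (i + 1) ⊂ C i) :
    Disjoint (chainClass 𝒜 C i) (chainClass 𝒜 C j) := by
  refine disjoint_left.mpr fun X hXi hXj => ?_
  obtain ⟨a, haCi, haCi1⟩ := exists_of_ssubset hi
  have ha : a ∈ C i \ C (i + 1) := mem_sdiff.mpr ⟨haCi, haCi1⟩
  exact disjoint_left.mp ((mem_chainClass.mp hXj).2.2 i hij) ((mem_chainClass.mp hXi).2.1 ha) ha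

theorem not_subset_succ_of_mem_chainClass (hi : C (i + 1) ⊂ C i) (hX : X ∈ chainClass 𝒜 C i) :
    ¬X ⊆ C (i + 1) := fun hXi => by
  obtain ⟨a, haCi, haCi1⟩ := exists_of_ssubset hi
  exact haCi1 (hXi ((mem_chainClass.mp hX).2.1 (mem_sdiff.mpr ⟨haCi, haCi1⟩)))

theorem card_image_sdiff_chainClass :
    #((chainClass 𝒜 C i).image (· \ (C i \ C (i + 1)))) = #(chainClass 𝒜 C i) :=
  card_image_sdiff_of_forall_subset fun _ hX => (mem_chainClass.mp hX).2.1

end chainClass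

/-- `C 0 ⊋ ⋯ ⊋ C ℓ` is a chain in `𝒜` of maximum size (not merely maximal, as in `IsMaxChain`). -/
structure IsMaximumChain (𝒜 : Finset (Finset α)) (C : ℕ → Finset α) (ℓ : ℕ) : Prop where
  mem : ∀ i ≤ ℓ, C i ∈ 𝒜
  strictAntiOn : StrictAntiOn C (Set.Iic ℓ)
  card_le : ∀ 𝒞 ⊆ 𝒜, IsChain (· ⊆ ·) (𝒞 : Set (Finset α)) → #𝒞 ≤ ℓ + 1

namespace IsMaximumChain

variable {𝒜 : Finset (Finset α)} {C : ℕ → Finset α} {ℓ i j : ℕ} {X Y : Finset α}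

theorem subset_of_le (h : IsMaximumChain 𝒜 C ℓ) (hij : i ≤ j) (hj : j ≤ ℓ) : C j ⊆ C i :=
  h.strictAntiOn.antitoneOn (hij.trans hj) hj hij

theorem ssubset_succ (h : IsMaximumChain 𝒜 C ℓ) (hi : i < ℓ) : C (i + 1) ⊂ C i :=
  h.strictAntiOn hi.le (Nat.succ_le_of_lt hi) i.lt_succ_self

variable [DecidableEq α]

theorem exists_eq_of_forall_comparable (h : IsMaximumChain 𝒜 C ℓ) (hY : Y ∈ 𝒜)
    (hcomp : ∀ j ≤ ℓ, Y ⊆ C j ∨ C j ⊆ Y) : ∃ j ≤ ℓ, Y = C j := by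
  have hcard : #((Iic ℓ).image C) = ℓ + 1 := by
    rw [card_image_of_injOn (by simpa using h.strictAntiOn.injOn), Nat.card_Iic]
  have hchain : IsChain (· ⊆ ·) (insert Y (((Iic ℓ).image C : Finset _) : Set (Finset α))) := by
    refine IsChain.insert ?_ ?_
    · simp only [coe_image, coe_Iic]
      rintro _ ⟨a, ha, rfl⟩ _ ⟨b, hb, rfl⟩ -
      rcases le_total a b with hab | hba
      · exact Or.inr (h.subset_of_le hab hb)
      · exact Or.inl (h.subset_of_le hba ha)
    · simp only [coe_image, coe_Iic, Set.forall_mem_image]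
      exact fun j hj _ => hcomp j hj
  have := mem_of_isChain_insert_of_card_le (hcard ▸ h.card_le) hY ?_ hchain
  · simpa [eq_comm] using this
  · simpa [image_subset_iff] using h.mem

theorem eq_of_subset_last (h : IsMaximumChain 𝒜 C ℓ) (hX : X ∈ 𝒜) (hXℓ : X ⊆ C ℓ) :
    X = C ℓ := by
  obtain ⟨j, hj, rfl⟩ :=
    h.exists_eq_of_forall_comparable hX fun j hj => Or.inl (hXℓ.trans (h.subset_of_le hj le_rfl))
  exact hXℓ.antisymm (h.subset_of_le hj le_rfl)

theorem eq_or_eq_of_subset_of_subset (h : IsMaximumChain 𝒜 C ℓ) (hi : i < ℓ) (hY : Y ∈ 𝒜)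
    (hlow : C (i + 1) ⊆ Y) (hup : Y ⊆ C i) : Y = C i ∨ Y = C (i + 1) := by
  have hcomp : ∀ j ≤ ℓ, Y ⊆ C j ∨ C j ⊆ Y := fun j hj => by
    rcases le_or_gt j i with hji | hij
    · exact Or.inl (hup.trans (h.subset_of_le hji hi.le))
    · exact Or.inr ((h.subset_of_le hij hj).trans hlow)
  obtain ⟨j, hj, rfl⟩ := h.exists_eq_of_forall_comparable hY hcomp
  rcases le_or_gt j i with hji | hij
  · exact Or.inl (hup.antisymm (h.subset_of_le hji hi.le))
  · exact Or.inr ((h.subset_of_le hij hj).antisymm hlow)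

theorem exists_mem_chainClass (h : IsMaximumChain 𝒜 C ℓ)
    (huc : ∀ X ∈ 𝒜, ∀ Y ∈ 𝒜, X ∪ Y ∈ 𝒜) (hX : X ∈ 𝒜) (h0 : X ⊆ C 0) (hXℓ : X ≠ C ℓ) :
    ∃ i < ℓ, X ∈ chainClass 𝒜 C i := by
  obtain ⟨i, hi, hXi, hXi1⟩ :=
    exists_subset_and_not_subset_succ h0 fun hXℓ' => hXℓ (h.eq_of_subset_last hX hXℓ')
  have hCi1 : C (i + 1) ⊆ C i := h.subset_of_le i.le_succ hi
  have hunion : X ∪ C (i + 1) = C i :=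
    (h.eq_or_eq_of_subset_of_subset hi (huc X hX _ (h.mem _ hi)) subset_union_right
      (union_subset hXi hCi1)).resolve_right fun he => hXi1 (he ▸ subset_union_left)
  refine ⟨i, hi, mem_chainClass_of_subset hX ?_ hXi fun j hj => h.subset_of_le hj hi.le⟩
  rw [← hunion, union_sdiff_right]
  exact sdiff_subset

theorem pairwiseDisjoint_chainClass (h : IsMaximumChain 𝒜 C ℓ) :
    (range ℓ : Set ℕ).PairwiseDisjoint (chainClass 𝒜 C) := by
  intro i hi j hj hij
  rcases hij.lt_or_gt with hij | hji
  · exact disjoint_chainClass hij (h.ssubset_succ (mem_range.mp hi))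
  · exact (disjoint_chainClass hji (h.ssubset_succ (mem_range.mp hj))).symm

theorem erase_last_eq_biUnion_chainClass (h : IsMaximumChain 𝒜 C ℓ)
    (huc : ∀ X ∈ 𝒜, ∀ Y ∈ 𝒜, X ∪ Y ∈ 𝒜) (h0 : ∀ X ∈ 𝒜, X ⊆ C 0) :
    𝒜.erase (C ℓ) = (range ℓ).biUnion (chainClass 𝒜 C) := by
  ext X
  simp only [mem_erase, mem_biUnion, mem_range]
  constructor
  · rintro ⟨hXℓ, hX⟩
    exact h.exists_mem_chainClass huc hX (h0 X hX) hXℓ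
  · rintro ⟨i, hi, hXi⟩
    refine ⟨?_, (mem_chainClass.mp hXi).1⟩
    rintro rfl
    exact not_subset_succ_of_mem_chainClass (h.ssubset_succ hi) hXi (h.subset_of_le hi le_rfl)

theorem card_eq_one_add_sum_card_chainClass (h : IsMaximumChain 𝒜 C ℓ)
    (huc : ∀ X ∈ 𝒜, ∀ Y ∈ 𝒜, X ∪ Y ∈ 𝒜) (h0 : ∀ X ∈ 𝒜, X ⊆ C 0) :
    #𝒜 = 1 + ∑ i ∈ range ℓ, #(chainClass 𝒜 C i) := by
  rw [← card_biUnion h.pairwiseDisjoint_chainClass, ← h.erase_last_eq_biUnion_chainClass huc h0,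
    add_comm, card_erase_add_one (h.mem ℓ le_rfl)]

end IsMaximumChain

open Finset in
theorem card_eq_one_add_sum_Di_general (n ℓ : ℕ) (𝒜 : Finset (Finset (Fin n)))
    (huc : ∀ X ∈ 𝒜, ∀ Y ∈ 𝒜, X ∪ Y ∈ 𝒜)
    (C : ℕ → Finset (Fin n))
    (hC0 : C 0 = Finset.univ)
    (hmem : ∀ i ≤ ℓ, C i ∈ 𝒜)
    (hmono : ∀ i j, i < j → j ≤ ℓ → C j ⊂ C i)
    (hmax : ∀ 𝒞 ⊆ 𝒜, IsChain (· ⊆ ·) (𝒞 : Set (Finset (Fin n))) → 𝒞.card ≤ ℓ + 1) :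
    𝒜.erase (C ℓ) = (Finset.range ℓ).biUnion (fun i =>
        𝒜.filter (fun X => C i \ C (i+1) ⊆ X ∧
          X ∩ (Finset.range i).biUnion (fun j => C j \ C (j+1)) = ∅)) ∧
    (∀ i < ℓ, ∀ j < ℓ, i ≠ j →
      Disjoint
        (𝒜.filter (fun X => C i \ C (i+1) ⊆ X ∧
          X ∩ (Finset.range i).biUnion (fun j' => C j' \ C (j'+1)) = ∅))
        (𝒜.filter (fun X => C j \ C (j+1) ⊆ X ∧
          X ∩ (Finset.range j).biUnion (fun j' => C j' \ C (j'+1)) = ∅))) ∧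
    (∀ i < ℓ,
      ((𝒜.filter (fun X => C i \ C (i+1) ⊆ X ∧
          X ∩ (Finset.range i).biUnion (fun j => C j \ C (j+1)) = ∅)).image
            (fun X => X \ (C i \ C (i+1)))).card =
      (𝒜.filter (fun X => C i \ C (i+1) ⊆ X ∧
          X ∩ (Finset.range i).biUnion (fun j => C j \ C (j+1)) = ∅)).card) ∧
    𝒜.card = 1 + ∑ i ∈ Finset.range ℓ,
      ((𝒜.filter (fun X => C i \ C (i+1) ⊆ X ∧
          X ∩ (Finset.range i).biUnion (fun j => C j \ C (j+1)) = ∅)).image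
            (fun X => X \ (C i \ C (i+1)))).card := by
  have h : IsMaximumChain 𝒜 C ℓ := ⟨hmem, fun i _ j hj hij => hmono i j hij hj, hmax⟩
  have h0 : ∀ X ∈ 𝒜, X ⊆ C 0 := fun X _ => hC0 ▸ subset_univ X
  refine ⟨h.erase_last_eq_biUnion_chainClass huc h0,
    fun i hi j hj hij => h.pairwiseDisjoint_chainClass (mem_range.mpr hi) (mem_range.mpr hj) hij,
    fun i _ => card_image_sdiff_chainClass, ?_⟩
  rw [h.card_eq_one_add_sum_card_chainClass huc h0]
  exact congrArg (1 + ·) (sum_congr rfl fun i _ => card_image_sdiff_chainClass.symm)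

open Finset in
/-- With a maximum chain [n] = C 0 ⊋ ⋯ ⊋ C ℓ in the union-closed family 𝒜,
setting 𝒞ᵢ and 𝒟ᵢ as in the paper (for 0 ≤ i < ℓ, with `C i` playing the role
of `C_{i+1}`): 𝒜 \ {C ℓ} = ⋃_{i<ℓ} 𝒞ᵢ, the 𝒞ᵢ are pairwise disjoint,
|𝒟ᵢ| = |𝒞ᵢ|, and |𝒜| = 1 + ∑_{i<ℓ} |𝒟ᵢ|. -/
theorem card_eq_one_add_sum_Di (n ℓ : ℕ) (𝒜 : Finset (Finset (Fin n)))
    (hne : ∃ A ∈ 𝒜, A.Nonempty)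
    (huc : ∀ X ∈ 𝒜, ∀ Y ∈ 𝒜, X ∪ Y ∈ 𝒜)
    (huniv : 𝒜.sup id = Finset.univ)
    (C : ℕ → Finset (Fin n))
    (hC0 : C 0 = Finset.univ)
    (hmem : ∀ i ≤ ℓ, C i ∈ 𝒜)
    (hmono : ∀ i j, i < j → j ≤ ℓ → C j ⊂ C i)
    (hmax : ∀ 𝒞 ⊆ 𝒜, IsChain (· ⊆ ·) (𝒞 : Set (Finset (Fin n))) → 𝒞.card ≤ ℓ + 1) :
    𝒜.erase (C ℓ) = (Finset.range ℓ).biUnion (fun i =>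
        𝒜.filter (fun X => C i \ C (i+1) ⊆ X ∧
          X ∩ (Finset.range i).biUnion (fun j => C j \ C (j+1)) = ∅)) ∧
    (∀ i < ℓ, ∀ j < ℓ, i ≠ j →
      Disjoint
        (𝒜.filter (fun X => C i \ C (i+1) ⊆ X ∧
          X ∩ (Finset.range i).biUnion (fun j' => C j' \ C (j'+1)) = ∅))
        (𝒜.filter (fun X => C j \ C (j+1) ⊆ X ∧
          X ∩ (Finset.range j).biUnion (fun j' => C j' \ C (j'+1)) = ∅))) ∧
    (∀ i < ℓ,
      ((𝒜.filter (fun X => C i \ C (i+1) ⊆ X ∧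
          X ∩ (Finset.range i).biUnion (fun j => C j \ C (j+1)) = ∅)).image
            (fun X => X \ (C i \ C (i+1)))).card =
      (𝒜.filter (fun X => C i \ C (i+1) ⊆ X ∧
          X ∩ (Finset.range i).biUnion (fun j => C j \ C (j+1)) = ∅)).card) ∧
    𝒜.card = 1 + ∑ i ∈ Finset.range ℓ,
      ((𝒜.filter (fun X => C i \ C (i+1) ⊆ X ∧
          X ∩ (Finset.range i).biUnion (fun j => C j \ C (j+1)) = ∅)).image
            (fun X => X \ (C i \ C (i+1)))).card :=
  card_eq_one_add_sum_Di_general n ℓ 𝒜 huc C hC0 hmem hmono hmax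
end

section
/- With notation as above, for each i ∈ [ℓ]: the universe of 𝒟ᵢ has size at most n − i, and the length of 𝒟ᵢ is at most ℓ. -/
/-!
Write `Lⱼ = C j \ C (j+1)` for the layers of the chain. Every member of `𝒟ᵢ` avoids
`L₀, …, Lᵢ`, whose union is `C 0 \ C (i+1)`, a set of at least `i + 1` elements because the
chain is strict; this bounds the universe of `𝒟ᵢ`. Adding `Lᵢ` back, `Y ↦ Y ∪ Lᵢ` maps `𝒟ᵢ`
injectively into `𝒜` and preserves inclusion, so chains of `𝒟ᵢ` are no longer than those of `𝒜`.
-/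

namespace Finset

variable {α : Type*} [DecidableEq α]

theorem biUnion_range_sdiff_succ {C : ℕ → Finset α} {k : ℕ} (hC : AntitoneOn C (Set.Iic k)) :
    (range k).biUnion (fun j => C j \ C (j + 1)) = C 0 \ C k := by
  induction k with
  | zero => simp
  | succ k ih =>
    have hC' : AntitoneOn C (Set.Iic k) := hC.mono (Set.Iic_subset_Iic.mpr k.le_succ)
    have hk0 : C k ⊆ C 0 := hC' (Set.mem_Iic.mpr k.zero_le) Set.self_mem_Iic k.zero_le
    have hkk : C (k + 1) ⊆ C k :=
      hC (Set.mem_Iic.mpr k.le_succ) Set.self_mem_Iic k.le_succ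
    rw [range_add_one, biUnion_insert, ih hC', union_comm, sdiff_union_sdiff_cancel hk0 hkk]

theorem le_card_sdiff_of_strictAntiOn {C : ℕ → Finset α} {k : ℕ}
    (hC : StrictAntiOn C (Set.Iic k)) : k ≤ #(C 0 \ C k) := by
  induction k with
  | zero => simp
  | succ k ih =>
    have hC' : StrictAntiOn C (Set.Iic k) := hC.mono (Set.Iic_subset_Iic.mpr k.le_succ)
    have hk0 : C k ⊆ C 0 := hC'.antitoneOn (Set.mem_Iic.mpr k.zero_le) Set.self_mem_Iic k.zero_le
    have hkk : C (k + 1) ⊂ C k :=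
      hC (Set.mem_Iic.mpr k.le_succ) Set.self_mem_Iic k.lt_succ_self
    have ih := ih hC'
    rw [card_sdiff_of_subset hk0] at ih
    rw [card_sdiff_of_subset (hkk.subset.trans hk0)]
    have := card_lt_card hkk
    have := card_le_card hk0
    omega

theorem card_le_of_isChain_subset_image_sdiff {𝒜 : Finset (Finset α)} {m : ℕ}
    (h𝒜 : ∀ 𝒞 ⊆ 𝒜, IsChain (· ⊆ ·) (𝒞 : Set (Finset α)) → #𝒞 ≤ m) (D : Finset α) :
    ∀ 𝒞 ⊆ (𝒜.filter (D ⊆ ·)).image (· \ D),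
      IsChain (· ⊆ ·) (𝒞 : Set (Finset α)) → #𝒞 ≤ m := by
  intro 𝒞 h𝒞 hchain
  have hdisj : ∀ Y ∈ 𝒞, Disjoint Y D := by
    intro Y hY
    obtain ⟨X, -, rfl⟩ := mem_image.mp (h𝒞 hY)
    exact sdiff_disjoint
  have hinj : Set.InjOn (· ∪ D) 𝒞 := fun Y hY Z hZ h => by
    simpa [union_sdiff_right, (hdisj Y hY).sdiff_eq_left, (hdisj Z hZ).sdiff_eq_left]
      using congrArg (· \ D) h
  rw [← card_image_of_injOn hinj]
  refine h𝒜 _ (fun Z hZ => ?_) ?_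
  · obtain ⟨Y, hY, rfl⟩ := mem_image.mp hZ
    obtain ⟨X, hX, rfl⟩ := mem_image.mp (h𝒞 hY)
    rw [mem_filter] at hX
    rw [sdiff_union_of_subset hX.2]
    exact hX.1
  · rw [coe_image]
    exact hchain.image_of_map_rel _ _ (· ∪ D) fun _ _ => union_subset_union_left

end Finset

open Finset in
/-- Indices are shifted by one from the paper: `C i` is its `C_{i+1}`, so `i < ℓ` here is its
`i + 1 ∈ [ℓ]`. -/
theorem Di_universe_and_length_general (n ℓ : ℕ) (𝒜 : Finset (Finset (Fin n)))
    (C : ℕ → Finset (Fin n))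
    (hmono : ∀ i j, i < j → j ≤ ℓ → C j ⊂ C i)
    (hmax : ∀ 𝒞 ⊆ 𝒜, IsChain (· ⊆ ·) (𝒞 : Set (Finset (Fin n))) → 𝒞.card ≤ ℓ + 1)
    (i : ℕ) (hi : i < ℓ) :
    ((((𝒜.filter (fun X => C i \ C (i+1) ⊆ X ∧
          X ∩ (Finset.range i).biUnion (fun j => C j \ C (j+1)) = ∅)).image
            (fun X => X \ (C i \ C (i+1)))).sup id).card ≤ n - (i + 1)) ∧
    (∀ 𝒞 ⊆ ((𝒜.filter (fun X => C i \ C (i+1) ⊆ X ∧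
          X ∩ (Finset.range i).biUnion (fun j => C j \ C (j+1)) = ∅)).image
            (fun X => X \ (C i \ C (i+1)))),
      IsChain (· ⊆ ·) (𝒞 : Set (Finset (Fin n))) → 𝒞.card ≤ ℓ + 1) := by
  set L : ℕ → Finset (Fin n) := fun j => C j \ C (j + 1)
  set 𝒟 := (𝒜.filter fun X => L i ⊆ X ∧ X ∩ (range i).biUnion L = ∅).image (· \ L i)
  have hC : StrictAntiOn C (Set.Iic (i + 1)) := fun a _ b hb hab => hmono a b hab (le_trans hb hi)
  have havoid : ∀ X, X ∩ (range i).biUnion L = ∅ → Disjoint (X \ L i) (C 0 \ C (i + 1)) := by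
    intro X hX
    rw [← biUnion_range_sdiff_succ hC.antitoneOn, range_add_one, biUnion_insert]
    exact disjoint_union_right.mpr
      ⟨sdiff_disjoint, (disjoint_iff_inter_eq_empty.mpr hX).mono_left sdiff_subset⟩
  refine ⟨?_, fun 𝒞 h𝒞 => card_le_of_isChain_subset_image_sdiff hmax (L i) 𝒞
    (h𝒞.trans (image_subset_image (monotone_filter_right _ fun _ _ hX => hX.1)))⟩
  have hsup : Disjoint (𝒟.sup id) (C 0 \ C (i + 1)) := by
    rw [Finset.disjoint_sup_left]
    rintro _ hY
    obtain ⟨X, hX, rfl⟩ := mem_image.mp hY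
    exact havoid X (mem_filter.mp hX).2.2
  calc _ ≤ #(C 0 \ C (i + 1))ᶜ := card_le_card (subset_compl_iff_disjoint_right.mpr hsup)
    _ ≤ n - (i + 1) := by
      rw [card_compl, Fintype.card_fin]
      exact Nat.sub_le_sub_left (le_card_sdiff_of_strictAntiOn hC) n

open Finset in
/-- With notation as in the paper (maximum chain [n] = C 0 ⊋ ⋯ ⊋ C ℓ, `C i`
playing the role of `C_{i+1}`), for each i < ℓ the universe of 𝒟ᵢ has size at
most n − (i+1), and every chain in 𝒟ᵢ has size at most ℓ + 1 (length ≤ ℓ). -/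
theorem Di_universe_and_length (n ℓ : ℕ) (𝒜 : Finset (Finset (Fin n)))
    (hne : ∃ A ∈ 𝒜, A.Nonempty)
    (huc : ∀ X ∈ 𝒜, ∀ Y ∈ 𝒜, X ∪ Y ∈ 𝒜)
    (huniv : 𝒜.sup id = Finset.univ)
    (C : ℕ → Finset (Fin n))
    (hC0 : C 0 = Finset.univ)
    (hmem : ∀ i ≤ ℓ, C i ∈ 𝒜)
    (hmono : ∀ i j, i < j → j ≤ ℓ → C j ⊂ C i)
    (hmax : ∀ 𝒞 ⊆ 𝒜, IsChain (· ⊆ ·) (𝒞 : Set (Finset (Fin n))) → 𝒞.card ≤ ℓ + 1)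
    (i : ℕ) (hi : i < ℓ) :
    ((((𝒜.filter (fun X => C i \ C (i+1) ⊆ X ∧
          X ∩ (Finset.range i).biUnion (fun j => C j \ C (j+1)) = ∅)).image
            (fun X => X \ (C i \ C (i+1)))).sup id).card ≤ n - (i + 1)) ∧
    (∀ 𝒞 ⊆ ((𝒜.filter (fun X => C i \ C (i+1) ⊆ X ∧
          X ∩ (Finset.range i).biUnion (fun j => C j \ C (j+1)) = ∅)).image
            (fun X => X \ (C i \ C (i+1)))),
      IsChain (· ⊆ ·) (𝒞 : Set (Finset (Fin n))) → 𝒞.card ≤ ℓ + 1) :=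
  Di_universe_and_length_general n ℓ 𝒜 C hmono hmax i hi
end

section
/- Let 𝒜 be a union-closed family with universe [n] and length ℓ ≥ 2. Then for every nonnegative integer p, |𝒜| ≤ (ℓ^p − 1)/(ℓ − 1) + 2^n (1 − 2^{−ℓ})^p. -/
/-!
Let `U` be the largest member of a union-closed family `𝒜` and `C` a maximal member of
`𝒜 \ {U}`. Every `B ∈ 𝒜` satisfies `B ⊆ C` or `B ∪ C = U`, and both parts are union-closed
families living in intervals of the subset lattice of smaller dimension than the one containing
`𝒜`; moreover `U` sits on top of every chain below `C`, so those chains are shorter. With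
`G = ∑_{i<p} ℓ^i` and `q = 1 - 2^{-ℓ}`, induction on the chain bound `r ≤ ℓ` turns the bound
`G + q^p 2^d` for chains of at most `ℓ + 1` members in dimension `d` into
`1 + r G + q^p 2^d (1 - 2^{-r})` for chains of at most `r + 1` members; at `r = ℓ` this is the
bound for `p + 1`, starting from the trivial `2^d` at `p = 0`.
-/

open Finset

variable {α : Type*}

def ChainsCardLE (𝒜 : Finset (Finset α)) (k : ℕ) : Prop :=
  ∀ 𝒞 ⊆ 𝒜, IsChain (· ⊆ ·) (𝒞 : Set (Finset α)) → #𝒞 ≤ k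

namespace ChainsCardLE

variable {𝒜 ℬ : Finset (Finset α)} {k m : ℕ}

theorem mono (h : ChainsCardLE 𝒜 k) (hℬ : ℬ ⊆ 𝒜) (hkm : k ≤ m) : ChainsCardLE ℬ m :=
  fun 𝒞 h𝒞 hchain ↦ (h 𝒞 (h𝒞.trans hℬ) hchain).trans hkm

variable [DecidableEq α]

theorem of_ssubset_mem {U : Finset α} (h : ChainsCardLE 𝒜 (k + 1)) (hU : U ∈ 𝒜) (hℬ : ℬ ⊆ 𝒜)
    (hlt : ∀ B ∈ ℬ, B ⊂ U) : ChainsCardLE ℬ k := by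
  intro 𝒞 h𝒞 hchain
  have hU𝒞 : U ∉ 𝒞 := fun hU𝒞 ↦ (hlt U (h𝒞 hU𝒞)).ne rfl
  have hins := h (insert U 𝒞) (insert_subset hU (h𝒞.trans hℬ)) <| by
    rw [coe_insert]
    exact hchain.insert fun B hB _ ↦ .inr (hlt B (h𝒞 hB)).subset
  rwa [card_insert_of_notMem hU𝒞, add_le_add_iff_right] at hins

theorem eq_of_subset (h : ChainsCardLE 𝒜 1) {A B : Finset α} (hA : A ∈ 𝒜) (hB : B ∈ 𝒜)
    (hAB : A ⊆ B) : A = B := by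
  have hpair := h {A, B} (insert_subset hA (singleton_subset_iff.2 hB)) <| by
    rw [coe_pair]
    exact IsChain.pair hAB
  exact card_le_one.1 hpair A (mem_insert_self _ _) B (mem_insert_of_mem (mem_singleton_self _))

end ChainsCardLE

variable [DecidableEq α]

theorem SupClosed.card_le_one_of_chainsCardLE_one {𝒜 : Finset (Finset α)}
    (hS : SupClosed (𝒜 : Set (Finset α))) (h : ChainsCardLE 𝒜 1) : #𝒜 ≤ 1 :=
  Finset.card_le_one.2 fun _ hA _ hB ↦
    (h.eq_of_subset hA (hS hA hB) subset_union_left).trans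
      (h.eq_of_subset hB (hS hA hB) subset_union_right).symm

theorem card_le_two_pow_card_sdiff {𝒜 : Finset (Finset α)} {L H : Finset α}
    (h : 𝒜 ⊆ Icc L H) : #𝒜 ≤ 2 ^ #(H \ L) := by
  by_cases hLH : L ⊆ H
  · calc #𝒜 ≤ #(Icc L H) := card_le_card h
      _ = 2 ^ #(H \ L) := by rw [card_Icc_finset hLH, card_sdiff_of_subset hLH]
  · rw [Icc_eq_empty_iff.2 hLH, subset_empty] at h
    simp [h]

theorem SupClosed.filter_subset {𝒜 : Finset (Finset α)}
    (hS : SupClosed (𝒜 : Set (Finset α))) (C : Finset α) :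
    SupClosed (↑{B ∈ 𝒜 | B ⊆ C} : Set (Finset α)) := by
  intro X hX Y hY
  simp only [mem_coe, mem_filter] at hX hY ⊢
  exact ⟨hS hX.1 hY.1, union_subset hX.2 hY.2⟩

theorem SupClosed.filter_union_eq {𝒜 : Finset (Finset α)}
    (hS : SupClosed (𝒜 : Set (Finset α))) {C U : Finset α} (hU : ∀ B ∈ 𝒜, B ⊆ U) :
    SupClosed (↑{B ∈ 𝒜 | B ∪ C = U} : Set (Finset α)) := by
  intro X hX Y hY
  simp only [mem_coe, mem_filter] at hX hY ⊢
  refine ⟨hS hX.1 hY.1, ?_⟩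
  rw [sup_eq_union, union_assoc, hY.2, union_eq_right]
  exact hU X hX.1

theorem SupClosed.subset_or_union_eq_sup {𝒜 : Finset (Finset α)}
    (hS : SupClosed (𝒜 : Set (Finset α))) {C : Finset α}
    (hC : Maximal (· ∈ 𝒜.erase (𝒜.sup id)) C) {B : Finset α} (hB : B ∈ 𝒜) :
    B ⊆ C ∨ B ∪ C = 𝒜.sup id := by
  by_cases hBC : B ∪ C = 𝒜.sup id
  · exact .inr hBC
  · exact .inl <| subset_union_left.trans <|
      hC.2 (mem_erase.2 ⟨hBC, hS hB (mem_of_mem_erase hC.1)⟩) subset_union_right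

theorem card_le_card_filter_union_eq_add_card_filter_subset {𝒜 : Finset (Finset α)}
    (hS : SupClosed (𝒜 : Set (Finset α))) {C : Finset α}
    (hC : Maximal (· ∈ 𝒜.erase (𝒜.sup id)) C) :
    #𝒜 ≤ #{B ∈ 𝒜 | B ∪ C = 𝒜.sup id} + #{B ∈ 𝒜 | B ⊆ C} := by
  calc #𝒜 ≤ #({B ∈ 𝒜 | B ∪ C = 𝒜.sup id} ∪ {B ∈ 𝒜 | B ⊆ C}) := by
        refine card_le_card fun B hB ↦ ?_
        rcases hS.subset_or_union_eq_sup hC hB with hBC | hBC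
        · exact mem_union_right _ (mem_filter.2 ⟨hB, hBC⟩)
        · exact mem_union_left _ (mem_filter.2 ⟨hB, hBC⟩)
    _ ≤ _ := card_union_le _ _

theorem filter_union_eq_subset_Icc {𝒜 : Finset (Finset α)} {L H C U : Finset α}
    (h𝒜 : 𝒜 ⊆ Icc L H) : {B ∈ 𝒜 | B ∪ C = U} ⊆ Icc (L ∪ (U \ C)) H := by
  intro B hB
  obtain ⟨hB𝒜, hBC⟩ := mem_filter.1 hB
  obtain ⟨hLB, hBH⟩ := mem_Icc.1 (h𝒜 hB𝒜)
  refine mem_Icc.2 ⟨union_subset hLB fun x hx ↦ ?_, hBH⟩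
  obtain ⟨hxU, hxC⟩ := mem_sdiff.1 hx
  rw [← hBC, mem_union] at hxU
  exact hxU.resolve_right hxC

theorem filter_subset_subset_Icc {𝒜 : Finset (Finset α)} {L H C : Finset α}
    (h𝒜 : 𝒜 ⊆ Icc L H) : {B ∈ 𝒜 | B ⊆ C} ⊆ Icc L C := fun _ hB ↦
  mem_Icc.2 ⟨(mem_Icc.1 (h𝒜 (mem_filter.1 hB).1)).1, (mem_filter.1 hB).2⟩

variable (α) in
def UnionClosedCardBound (k : ℕ) (f : ℕ → ℝ) : Prop :=
  ∀ (𝒜 : Finset (Finset α)) (L H : Finset α), SupClosed (𝒜 : Set (Finset α)) →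
    ChainsCardLE 𝒜 k → 𝒜 ⊆ Icc L H → (#𝒜 : ℝ) ≤ f #(H \ L)

theorem one_sub_inv_two_pow_nonneg (i : ℕ) : (0 : ℝ) ≤ 1 - 2⁻¹ ^ i :=
  sub_nonneg.2 (pow_le_one₀ (by norm_num) (by norm_num))

namespace UnionClosedCardBound

variable {k K : ℕ} {f g h : ℕ → ℝ}

theorem mono (hf : UnionClosedCardBound α k f) (hfg : ∀ d, f d ≤ g d) :
    UnionClosedCardBound α k g :=
  fun 𝒜 L H hS hk h𝒜 ↦ (hf 𝒜 L H hS hk h𝒜).trans (hfg _)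

theorem two_pow : UnionClosedCardBound α k fun d ↦ (2 : ℝ) ^ d :=
  fun _ _ _ _ _ h𝒜 ↦ by beta_reduce; exact_mod_cast card_le_two_pow_card_sdiff h𝒜

theorem one : UnionClosedCardBound α 1 fun _ ↦ 1 :=
  fun _ _ _ hS hk _ ↦ Nat.cast_le_one.2 (hS.card_le_one_of_chainsCardLE_one hk)

theorem succ (hf : UnionClosedCardBound α K f) (hg : UnionClosedCardBound α k g) (hkK : k < K)
    (hf_mono : Monotone f) (hg_mono : Monotone g) (h_one : ∀ d, 1 ≤ h d)
    (h_succ : ∀ d, f d + g d ≤ h (d + 1)) : UnionClosedCardBound α (k + 1) h := by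
  intro 𝒜 L H hS hk h𝒜
  obtain h𝒜_card | h𝒜_card := le_or_gt #𝒜 1
  · exact (Nat.cast_le_one.2 h𝒜_card).trans (h_one _)
  set U := 𝒜.sup id
  have hU : U ∈ 𝒜 := hS.finsetSup_mem (card_pos.1 (by omega)) fun _ ↦ id
  obtain ⟨C, hC⟩ :=
    exists_maximal <| (one_lt_card_iff_nontrivial.1 h𝒜_card).erase_nonempty (a := U)
  have hCA : C ∈ 𝒜 := mem_of_mem_erase hC.1
  have hCU : C ⊂ U := (le_sup (f := id) hCA).lt_of_ne (ne_of_mem_erase hC.1)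
  obtain ⟨hLC, hCH⟩ := mem_Icc.1 (h𝒜 hCA)
  have hUH : U ⊆ H := Finset.sup_le fun B hB ↦ (mem_Icc.1 (h𝒜 hB)).2
  obtain ⟨x, hxU, hxC⟩ := exists_of_ssubset hCU
  have hxHL : x ∈ H \ L := mem_sdiff.2 ⟨hUH hxU, fun hxL ↦ hxC (hLC hxL)⟩
  have hupper : #(H \ (L ∪ (U \ C))) < #(H \ L) := card_lt_card <|
    (ssubset_iff_of_subset (sdiff_subset_sdiff le_rfl subset_union_left)).2
      ⟨x, hxHL, fun hx ↦ (mem_sdiff.1 hx).2 (mem_union_right _ (mem_sdiff.2 ⟨hxU, hxC⟩))⟩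
  have hlower : #(C \ L) < #(H \ L) := card_lt_card <|
    (ssubset_iff_of_subset (sdiff_subset_sdiff hCH le_rfl)).2
      ⟨x, hxHL, fun hx ↦ hxC (mem_sdiff.1 hx).1⟩
  obtain ⟨d, hd⟩ := Nat.exists_eq_add_one_of_ne_zero (Nat.ne_zero_of_lt hlower)
  calc (#𝒜 : ℝ) ≤ #{B ∈ 𝒜 | B ∪ C = U} + #{B ∈ 𝒜 | B ⊆ C} :=
        mod_cast card_le_card_filter_union_eq_add_card_filter_subset hS hC
    _ ≤ f #(H \ (L ∪ (U \ C))) + g #(C \ L) := by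
        gcongr
        · exact hf _ _ _ (hS.filter_union_eq fun B hB ↦ le_sup (f := id) hB)
            (hk.mono (filter_subset _ _) hkK) (filter_union_eq_subset_Icc h𝒜)
        · exact hg _ _ _ (hS.filter_subset C)
            (hk.of_ssubset_mem hU (filter_subset _ _) fun _ hB ↦
              (mem_filter.1 hB).2.trans_ssubset hCU)
            (filter_subset_subset_Icc h𝒜)
    _ ≤ f d + g d := by gcongr <;> [exact hf_mono (by omega); exact hg_mono (by omega)]
    _ ≤ h #(H \ L) := hd ▸ h_succ d

theorem shorter_chains {ℓ : ℕ} {G Q : ℝ} (hG : 0 ≤ G) (hQ : 0 ≤ Q)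
    (hP : UnionClosedCardBound α (ℓ + 1) fun d ↦ G + Q * 2 ^ d) {r : ℕ} (hr : r ≤ ℓ) :
    UnionClosedCardBound α (r + 1) fun d ↦ 1 + r * G + Q * 2 ^ d * (1 - 2⁻¹ ^ r) := by
  induction r with
  | zero => exact one.mono fun d ↦ by simp
  | succ r ih =>
    refine hP.succ (ih (by omega)) (by omega) ?_ ?_ (fun d ↦ ?_) (fun d ↦ ?_)
    · intro a b hab
      dsimp only
      gcongr
      norm_num
    · intro a b hab
      have := one_sub_inv_two_pow_nonneg r
      dsimp only
      gcongr
      norm_num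
    · have := one_sub_inv_two_pow_nonneg (r + 1)
      push_cast
      nlinarith [mul_nonneg (mul_nonneg hQ (pow_nonneg zero_le_two d)) this]
    · apply le_of_eq
      push_cast
      ring

theorem geom_sum_add (ℓ p : ℕ) : UnionClosedCardBound α (ℓ + 1)
    fun d ↦ ∑ i ∈ range p, (ℓ : ℝ) ^ i + (1 - 2⁻¹ ^ ℓ) ^ p * 2 ^ d := by
  induction p with
  | zero => exact two_pow.mono fun d ↦ by simp
  | succ p ih =>
    refine (shorter_chains (by positivity) (pow_nonneg (one_sub_inv_two_pow_nonneg ℓ) p) ih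
      le_rfl).mono fun d ↦ le_of_eq ?_
    rw [geom_sum_succ]
    ring

end UnionClosedCardBound

theorem union_closed_Theta_bound_general (n ℓ : ℕ) (hℓ : 2 ≤ ℓ)
    (𝒜 : Finset (Finset (Fin n)))
    (huc : ∀ X ∈ 𝒜, ∀ Y ∈ 𝒜, X ∪ Y ∈ 𝒜)
    (hmax : ∀ 𝒞 ⊆ 𝒜, IsChain (· ⊆ ·) (𝒞 : Set (Finset (Fin n))) → 𝒞.card ≤ ℓ + 1)
    (p : ℕ) :
    (𝒜.card : ℝ) ≤ ((ℓ : ℝ) ^ p - 1) / ((ℓ : ℝ) - 1)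
      + 2 ^ n * (1 - (2 : ℝ)⁻¹ ^ ℓ) ^ p := by
  have hbound := UnionClosedCardBound.geom_sum_add ℓ p 𝒜 ∅ univ huc hmax
    fun A _ ↦ mem_Icc.2 ⟨empty_subset A, subset_univ A⟩
  have hℓ_ne_one : (ℓ : ℝ) ≠ 1 := by exact_mod_cast (show ℓ ≠ 1 by omega)
  rw [sdiff_empty, card_univ, Fintype.card_fin, geom_sum_eq hℓ_ne_one] at hbound
  linarith

/-- For a union-closed family 𝒜 with universe [n] and length ℓ ≥ 2, and any
nonnegative integer p, |𝒜| ≤ (ℓ^p − 1)/(ℓ − 1) + 2^n (1 − 2^{−ℓ})^p. -/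
theorem union_closed_Theta_bound (n ℓ : ℕ) (hℓ : 2 ≤ ℓ)
    (𝒜 : Finset (Finset (Fin n)))
    (hne : ∃ A ∈ 𝒜, A.Nonempty)
    (huc : ∀ X ∈ 𝒜, ∀ Y ∈ 𝒜, X ∪ Y ∈ 𝒜)
    (huniv : 𝒜.sup id = Finset.univ)
    (hchain : ∃ 𝒞 ⊆ 𝒜, IsChain (· ⊆ ·) (𝒞 : Set (Finset (Fin n))) ∧ 𝒞.card = ℓ + 1)
    (hmax : ∀ 𝒞 ⊆ 𝒜, IsChain (· ⊆ ·) (𝒞 : Set (Finset (Fin n))) → 𝒞.card ≤ ℓ + 1)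
    (p : ℕ) :
    (𝒜.card : ℝ) ≤ ((ℓ : ℝ) ^ p - 1) / ((ℓ : ℝ) - 1)
      + 2 ^ n * (1 - (2 : ℝ)⁻¹ ^ ℓ) ^ p :=
  union_closed_Theta_bound_general n ℓ hℓ 𝒜 huc hmax p
end

section
/- For all integers 2 ≤ k ≤ n and every nonnegative integer p, ∑_{i=0}^{k} C(n, i) ≤ (k^p − 1)/(k − 1) + 2^n (1 − 2^{−k})^p. -/
open Finset

/-!
Write `T n k = ∑_{i ≤ k} C(n, i)` and `A k p = ∑_{j < p} k ^ j = (k ^ p - 1) / (k - 1)`. We show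
`T n k ≤ A k p + 2 ^ n (1 - 2⁻¹ ^ k) ^ p` for all `n`, `k` by induction on `p ≥ 1`.
Applying Pascal's rule `k + 1` times gives
`T (d + k + 1) (k + 1) = T d (k + 1) + ∑_{m ≤ k} T (d + m) k`,
and the induction hypothesis applied to every term on the right yields the bound for `p + 1`: the
polynomial parts combine because `(k + 1) A k p ≤ (k + 1) ^ p`, the exponential parts because
`(1 - x) (1 - 2x) ^ p ≤ (1 - 2x) (1 - x) ^ p` for `x = 2⁻¹ ^ (k + 1)`. When `n ≤ k + 1`,
Bernoulli's inequality suffices, and the base case `p = 1` is a direct induction on `k` by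
Pascal's rule.
-/

def sumChoose (n k : ℕ) : ℕ := ∑ i ∈ range (k + 1), n.choose i

@[simp]
lemma sumChoose_zero_right (n : ℕ) : sumChoose n 0 = 1 := by
  simp [sumChoose]

lemma sumChoose_of_le {n k : ℕ} (h : n ≤ k) : sumChoose n k = 2 ^ n := by
  rw [sumChoose, ← Nat.sum_range_choose n]
  refine (sum_subset (range_subset_range.2 (by omega)) fun i _ hi => ?_).symm
  exact Nat.choose_eq_zero_of_lt (by simp only [mem_range] at hi; omega)

lemma sumChoose_le_two_pow (n k : ℕ) : sumChoose n k ≤ 2 ^ n :=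
  calc sumChoose n k ≤ sumChoose n (n + k) :=
        sum_le_sum_of_subset (range_subset_range.2 (by omega))
    _ = 2 ^ n := sumChoose_of_le (by omega)

lemma sumChoose_succ_succ (n k : ℕ) :
    sumChoose (n + 1) (k + 1) = sumChoose n (k + 1) + sumChoose n k := by
  simp only [sumChoose]
  rw [sum_range_succ' _ (k + 1), sum_range_succ' (n.choose ·) (k + 1)]
  simp only [Nat.choose_succ_succ, sum_add_distrib, Nat.choose_zero_right]
  ring

lemma sumChoose_add (n j k : ℕ) :
    sumChoose (n + j) (k + 1) = sumChoose n (k + 1) + ∑ m ∈ range j, sumChoose (n + m) k := by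
  induction j with
  | zero => simp
  | succ j ih => rw [← add_assoc, sumChoose_succ_succ, ih, sum_range_succ, add_assoc]

lemma geom_sum_le_add_one_pow {R : Type*} [CommSemiring R] [PartialOrder R] [IsOrderedRing R]
    {x : R} (hx : 0 ≤ x) (p : ℕ) : ∑ j ∈ range (p + 1), x ^ j ≤ (x + 1) ^ p := by
  rw [add_pow]
  refine sum_le_sum fun j hj => ?_
  rw [one_pow, mul_one]
  have h1 : ((1 : ℕ) : R) ≤ p.choose j :=
    Nat.mono_cast (Nat.choose_pos (Nat.lt_succ_iff.1 (mem_range.1 hj)))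
  exact le_mul_of_one_le_right (pow_nonneg hx j) (by simpa using h1)

lemma one_sub_mul_one_sub_two_mul_pow_le {x : ℝ} (hx : 0 ≤ x) (hx2 : 2 * x ≤ 1) (p : ℕ) :
    (1 - x) * (1 - 2 * x) ^ (p + 1) ≤ (1 - 2 * x) * (1 - x) ^ (p + 1) := by
  rw [pow_succ', pow_succ', mul_left_comm]
  gcongr
  · nlinarith
  · linarith

lemma one_sub_pow_add_inv_sub_one_mul_le {x : ℝ} (hx : 0 < x) (hx2 : 2 * x ≤ 1) (p : ℕ) :
    (1 - x) ^ (p + 1) + (x⁻¹ - 1) * (1 - 2 * x) ^ (p + 1) ≤ x⁻¹ * (1 - x) ^ (p + 2) := by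
  have key := one_sub_mul_one_sub_two_mul_pow_le hx.le hx2 p
  have hdiff : x⁻¹ * (1 - x) ^ (p + 2) - ((1 - x) ^ (p + 1) + (x⁻¹ - 1) * (1 - 2 * x) ^ (p + 1))
      = x⁻¹ * ((1 - 2 * x) * (1 - x) ^ (p + 1) - (1 - x) * (1 - 2 * x) ^ (p + 1)) := by
    field_simp
    ring
  linarith [mul_nonneg (inv_nonneg.2 hx.le) (sub_nonneg.2 key)]

lemma sumChoose_le_one_add (n k : ℕ) : (sumChoose n k : ℝ) ≤ 1 + 2 ^ n * (1 - 2⁻¹ ^ k) := by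
  induction k generalizing n with
  | zero => simp
  | succ k ih =>
    cases n with
    | zero =>
      rw [sumChoose_of_le (Nat.zero_le _)]
      have hle : (2⁻¹ : ℝ) ^ (k + 1) ≤ 1 := pow_le_one₀ (by norm_num) (by norm_num)
      simp only [pow_zero, Nat.cast_one, one_mul]
      linarith
    | succ m =>
      have h := (Nat.cast_le (α := ℝ)).2 (sumChoose_le_two_pow m (k + 1))
      rw [sumChoose_succ_succ, Nat.cast_add]
      push_cast at h
      calc _ ≤ 2 ^ m + (1 + 2 ^ m * (1 - 2⁻¹ ^ k)) := add_le_add h (ih m)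
        _ = 1 + 2 ^ (m + 1) * (1 - 2⁻¹ ^ (k + 1)) := by ring

lemma two_pow_le_geom_sum_add {n k : ℕ} (hk : 1 ≤ k) (hnk : n ≤ k) (p : ℕ) :
    (2 : ℝ) ^ n ≤ ∑ j ∈ range p, (k : ℝ) ^ j + 2 ^ n * (1 - 2⁻¹ ^ k) ^ p := by
  have hsmall : (2 : ℝ) ^ n * 2⁻¹ ^ k ≤ 1 := by
    rw [inv_pow, ← div_eq_mul_inv, div_le_one (by positivity)]
    exact pow_le_pow_right₀ (by norm_num) hnk
  have hle : (2⁻¹ : ℝ) ^ k ≤ 1 := pow_le_one₀ (by norm_num) (by norm_num)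
  have hbern : 1 + p * -(2⁻¹ ^ k : ℝ) ≤ (1 + -2⁻¹ ^ k) ^ p := one_add_mul_le_pow (by linarith) p
  have hgeom : (p : ℝ) ≤ ∑ j ∈ range p, (k : ℝ) ^ j := by
    simpa using card_nsmul_le_sum (range p) (fun j => (k : ℝ) ^ j) 1
      fun j _ => one_le_pow₀ (by exact_mod_cast hk)
  rw [← sub_eq_add_neg] at hbern
  linarith [mul_le_mul_of_nonneg_left hbern (by positivity : (0 : ℝ) ≤ 2 ^ n),
    mul_le_mul_of_nonneg_left hsmall (Nat.cast_nonneg p)]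

lemma sumChoose_add_succ_le {p : ℕ} (hp : 1 ≤ p)
    (ih : ∀ n k, (sumChoose n k : ℝ) ≤ ∑ j ∈ range p, (k : ℝ) ^ j + 2 ^ n * (1 - 2⁻¹ ^ k) ^ p)
    (d k : ℕ) :
    (sumChoose (d + (k + 1)) (k + 1) : ℝ) ≤
      ∑ j ∈ range (p + 1), ((k + 1 : ℕ) : ℝ) ^ j +
        2 ^ (d + (k + 1)) * (1 - 2⁻¹ ^ (k + 1)) ^ (p + 1) := by
  obtain ⟨q, rfl⟩ := Nat.exists_eq_add_of_le' hp
  set x : ℝ := 2⁻¹ ^ (k + 1) with hx_def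
  have hx : 0 < x := by positivity
  have hx2 : 2⁻¹ ^ k = 2 * x := by rw [hx_def, pow_succ]; ring
  have hxinv : x⁻¹ = 2 ^ (k + 1) := by rw [hx_def, inv_pow, inv_inv]
  have hsplit : (sumChoose (d + (k + 1)) (k + 1) : ℝ) =
      sumChoose d (k + 1) + ∑ m ∈ range (k + 1), (sumChoose (d + m) k : ℝ) := by
    exact_mod_cast sumChoose_add d (k + 1) k
  have hlower : ∑ m ∈ range (k + 1), (sumChoose (d + m) k : ℝ) ≤
      (k + 1) * ∑ j ∈ range (q + 1), (k : ℝ) ^ j +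
        2 ^ d * (x⁻¹ - 1) * (1 - 2 * x) ^ (q + 1) := by
    calc _ ≤ ∑ m ∈ range (k + 1),
            (∑ j ∈ range (q + 1), (k : ℝ) ^ j + 2 ^ d * 2 ^ m * (1 - 2 * x) ^ (q + 1)) :=
          sum_le_sum fun m _ => by rw [← pow_add, ← hx2]; exact ih _ _
      _ = _ := by
        rw [sum_add_distrib, sum_const, card_range, nsmul_eq_mul, ← sum_mul, ← mul_sum,
          geom_sum_eq (by norm_num : (2 : ℝ) ≠ 1), hxinv]
        push_cast
        ring
  have hpoly : (k + 1) * ∑ j ∈ range (q + 1), (k : ℝ) ^ j ≤ (k + 1) ^ (q + 1) := by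
    rw [pow_succ']
    gcongr
    exact geom_sum_le_add_one_pow (Nat.cast_nonneg k) q
  have hx2_le : 2 * x ≤ 1 := hx2 ▸ pow_le_one₀ (by norm_num) (by norm_num)
  have hexp := mul_le_mul_of_nonneg_left (one_sub_pow_add_inv_sub_one_mul_le hx hx2_le q)
    (by positivity : (0 : ℝ) ≤ 2 ^ d)
  have hupper := ih d (k + 1)
  rw [← hx_def] at hupper
  rw [hsplit, sum_range_succ (fun j => ((k + 1 : ℕ) : ℝ) ^ j), pow_add (2 : ℝ) d, ← hxinv]
  push_cast at hupper hpoly ⊢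
  linarith

theorem sumChoose_le_geom_sum_add (p n k : ℕ) :
    (sumChoose n k : ℝ) ≤ ∑ j ∈ range p, (k : ℝ) ^ j + 2 ^ n * (1 - 2⁻¹ ^ k) ^ p := by
  rcases Nat.eq_zero_or_pos p with rfl | hp
  · simpa using (Nat.cast_le (α := ℝ)).2 (sumChoose_le_two_pow n k)
  induction p, hp using Nat.le_induction generalizing n k with
  | base => simpa using sumChoose_le_one_add n k
  | succ p hp ih =>
    rcases k with _ | k
    · simp
    rcases le_total n (k + 1) with hn | hn
    · rw [sumChoose_of_le hn, Nat.cast_pow, Nat.cast_ofNat]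
      exact two_pow_le_geom_sum_add (by omega) hn _
    · obtain ⟨d, rfl⟩ := Nat.exists_eq_add_of_le' hn
      exact sumChoose_add_succ_le hp ih d k

theorem binomial_sum_le_Theta_general (k n p : ℕ) (hk : 2 ≤ k) :
    ((∑ i ∈ Finset.range (k + 1), n.choose i : ℕ) : ℝ) ≤
      ((k : ℝ) ^ p - 1) / ((k : ℝ) - 1) + 2 ^ n * (1 - (2 : ℝ)⁻¹ ^ k) ^ p := by
  rw [← geom_sum_eq (by norm_cast; omega : (k : ℝ) ≠ 1)]
  exact sumChoose_le_geom_sum_add p n k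

/-- For all 2 ≤ k ≤ n and every nonnegative integer p,
∑_{i=0}^{k} C(n,i) ≤ (k^p − 1)/(k − 1) + 2^n (1 − 2^{−k})^p. -/
theorem binomial_sum_le_Theta (k n p : ℕ) (hk : 2 ≤ k) (hkn : k ≤ n) :
    ((∑ i ∈ Finset.range (k + 1), n.choose i : ℕ) : ℝ) ≤
      ((k : ℝ) ^ p - 1) / ((k : ℝ) - 1) + 2 ^ n * (1 - (2 : ℝ)⁻¹ ^ k) ^ p :=
  binomial_sum_le_Theta_general k n p hk
end

section
/- For all integers 2 ≤ k ≤ n, ∑_{i=0}^{k} C(n, i) ≤ (k^{p̂} − 1)/(k − 1) + 2^n (1 − 2^{−k})^{p̂}, where p̂ = ⌊(n − k)/log₂(k/(1 − 2^{−k}))⌋ + 1. -/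
/-!
The inequality holds for every exponent `p ≥ 1` in place of `p̂`. Write
`V(n, k) = ∑_{i ≤ k} C(n, i)` and `Θ(n, k, p) = ∑_{j < p} k^j + 2^n (1 - 2^{-k})^p`. Pascal's rule
`V(n+1, k+1) = V(n, k+1) + V(n, k)` carries the bound from level `p` to level `p + 1`, because
`Θ(n, k+1, p) + Θ(n, k, p) ≤ Θ(n+1, k+1, p+1)` for `p ≥ 2`: with `x = 1 - 2^{-(k+1)}`, so that
`1 - 2^{-k} = 2x - 1`, this reduces to `∑_{j<p} k^j ≤ (k+1)^p` and
`(2x - 1)^{p-1} ≤ x^{2(p-1)} ≤ x^p`. The levels `p = 1, 2` come from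
`V(n+m, k+m) ≤ 2^{n+m} - 2^n + V(n, k)`, applied with `k = 0` and `k = 1`, and for `n ≤ k`, where
`V(n, k) = 2^n`, Bernoulli's inequality gives the bound at every level.
-/

open Finset

lemma geom_sum_le_one_add_pow {R : Type*} [CommSemiring R] [PartialOrder R] [IsOrderedRing R]
    {x : R} (hx : 0 ≤ x) (p : ℕ) : ∑ i ∈ range (p + 1), x ^ i ≤ (1 + x) ^ p := by
  induction p with
  | zero => simp
  | succ p ih =>
    calc ∑ i ∈ range (p + 2), x ^ i = 1 + x * ∑ i ∈ range (p + 1), x ^ i := by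
          rw [geom_sum_succ, add_comm]
      _ ≤ (1 + x) ^ p + x * (1 + x) ^ p := by
          gcongr
          exact one_le_pow₀ (le_add_of_nonneg_right hx)
      _ = (1 + x) ^ (p + 1) := by ring

lemma two_mul_sub_one_pow_le {R : Type*} [CommRing R] [LinearOrder R] [IsStrictOrderedRing R]
    {x : R} (h0 : 0 ≤ 2 * x - 1) (hx1 : x ≤ 1) {p : ℕ} (hp : 2 ≤ p) :
    (2 * x - 1) ^ p ≤ (2 * x - 1) * x ^ p := by
  obtain ⟨q, rfl⟩ : ∃ q, p = q + 1 := ⟨p - 1, by omega⟩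
  rw [pow_succ']
  gcongr
  calc (2 * x - 1) ^ q ≤ (x ^ 2) ^ q := by gcongr; nlinarith
    _ = x ^ (2 * q) := by rw [pow_mul]
    _ ≤ x ^ (q + 1) := pow_le_pow_of_le_one (by linarith) hx1 (by omega)

lemma two_pow_add_mul_inv_pow (r k : ℕ) : (2 : ℝ) ^ (r + k) * 2⁻¹ ^ k = 2 ^ r := by
  rw [pow_add, mul_assoc, ← mul_pow]
  norm_num

lemma natCast_add_one_le_add_two_pow_mul_inv_pow (r k : ℕ) :
    (r : ℝ) + 1 ≤ k + 2 ^ r * 2⁻¹ ^ k := by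
  rcases lt_or_ge r k with h | h
  · have : (r : ℝ) + 1 ≤ k := by exact_mod_cast h
    have : (0 : ℝ) ≤ 2 ^ r * 2⁻¹ ^ k := by positivity
    linarith
  · obtain ⟨s, rfl⟩ := Nat.exists_eq_add_of_le' h
    have : (s : ℝ) + 1 ≤ 2 ^ s := by exact_mod_cast s.lt_two_pow_self
    rw [two_pow_add_mul_inv_pow]
    push_cast
    linarith

def binomialSum (n k : ℕ) : ℕ := ∑ i ∈ range (k + 1), n.choose i

noncomputable def Theta (n k p : ℕ) : ℝ :=
  ∑ j ∈ range p, (k : ℝ) ^ j + 2 ^ n * (1 - 2⁻¹ ^ k) ^ p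

namespace binomialSum

@[simp] lemma zero_right (n : ℕ) : binomialSum n 0 = 1 := by simp [binomialSum]

@[simp] lemma zero_left (k : ℕ) : binomialSum 0 k = 1 := by
  simp [binomialSum, sum_range_succ', Nat.choose_zero_succ]

lemma one_right (n : ℕ) : binomialSum n 1 = n + 1 := by
  simp [binomialSum, sum_range_succ, add_comm]

lemma succ_succ (n k : ℕ) :
    binomialSum (n + 1) (k + 1) = binomialSum n (k + 1) + binomialSum n k := by
  simp only [binomialSum]
  rw [sum_range_succ' _ (k + 1), sum_range_succ' (n.choose ·) (k + 1)]
  simp only [Nat.choose_succ_succ, sum_add_distrib, Nat.choose_zero_right]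
  ring

lemma eq_two_pow_of_le {n k : ℕ} (h : n ≤ k) : binomialSum n k = 2 ^ n := by
  rw [binomialSum, ← Nat.sum_range_choose n]
  refine (sum_subset (range_subset_range.2 (by omega)) fun i hi hin => ?_).symm
  simp only [mem_range] at hi hin
  exact Nat.choose_eq_zero_of_lt (by omega)

lemma le_two_pow (n k : ℕ) : binomialSum n k ≤ 2 ^ n :=
  calc binomialSum n k ≤ binomialSum n (k + n) :=
        sum_le_sum_of_subset (range_subset_range.2 (by omega))
    _ = 2 ^ n := eq_two_pow_of_le (by omega)

lemma add_two_pow_le (n k m : ℕ) :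
    binomialSum (n + m) (k + m) + 2 ^ n ≤ 2 ^ (n + m) + binomialSum n k := by
  induction m with
  | zero => simp [add_comm]
  | succ m ih =>
    rw [← add_assoc, ← add_assoc, succ_succ, pow_succ]
    have := le_two_pow (n + m) (k + m + 1)
    omega

end binomialSum

lemma one_le_Theta (n k : ℕ) {p : ℕ} (hp : 1 ≤ p) : 1 ≤ Theta n k p := by
  obtain ⟨q, rfl⟩ := Nat.exists_eq_add_of_le' hp
  have : (2 : ℝ)⁻¹ ^ k ≤ 1 := pow_le_one₀ (by norm_num) (by norm_num)
  have : (0 : ℝ) ≤ 2 ^ n * (1 - 2⁻¹ ^ k) ^ (q + 1) := by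
    apply mul_nonneg (by positivity) (pow_nonneg (by linarith) _)
  have : (0 : ℝ) ≤ ∑ j ∈ range q, (k : ℝ) ^ (j + 1) := by positivity
  rw [Theta, sum_range_succ']
  simp only [pow_zero]
  linarith

lemma binomialSum_le_Theta_of_le {n k : ℕ} (hnk : n ≤ k) {p : ℕ} (hp : 1 ≤ p) :
    (binomialSum n k : ℝ) ≤ Theta n k p := by
  obtain rfl | hk := Nat.eq_zero_or_pos k
  · obtain rfl : n = 0 := by omega
    simpa using one_le_Theta 0 0 hp
  rw [binomialSum.eq_two_pow_of_le hnk, Theta]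
  have bernoulli : 1 + p * ((1 - 2⁻¹ ^ k) - 1) ≤ (1 - (2 : ℝ)⁻¹ ^ k) ^ p :=
    one_add_mul_sub_le_pow
      (by linarith [pow_le_one₀ (by norm_num : (0 : ℝ) ≤ 2⁻¹) (by norm_num) (n := k)]) p
  have hmass : (2 : ℝ) ^ n * 2⁻¹ ^ k ≤ 1 := by
    obtain ⟨s, rfl⟩ := Nat.exists_eq_add_of_le hnk
    rw [pow_add, ← mul_assoc, ← mul_pow]
    norm_num
    exact pow_le_one₀ (by norm_num) (by norm_num)
  have hp_le : (p : ℝ) ≤ ∑ j ∈ range p, (k : ℝ) ^ j := by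
    simpa using card_nsmul_le_sum (range p) (fun j => (k : ℝ) ^ j) 1
      fun j _ => one_le_pow₀ (by exact_mod_cast hk)
  push_cast
  nlinarith [mul_le_mul_of_nonneg_left bernoulli (by positivity : (0 : ℝ) ≤ 2 ^ n),
    mul_le_mul_of_nonneg_left hmass (Nat.cast_nonneg p : (0 : ℝ) ≤ p)]

lemma binomialSum_le_Theta_one (n k : ℕ) : (binomialSum n k : ℝ) ≤ Theta n k 1 := by
  rcases le_total n k with h | h
  · exact binomialSum_le_Theta_of_le h le_rfl
  obtain ⟨r, rfl⟩ := Nat.exists_eq_add_of_le' h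
  have key := binomialSum.add_two_pow_le r 0 k
  rw [zero_add, binomialSum.zero_right] at key
  have key' : (binomialSum (r + k) k : ℝ) + 2 ^ r ≤ 2 ^ (r + k) + 1 := by exact_mod_cast key
  have := two_pow_add_mul_inv_pow r k
  simp only [Theta, sum_range_one, pow_zero, pow_one]
  linarith

lemma binomialSum_le_Theta_two (n k : ℕ) : (binomialSum n k : ℝ) ≤ Theta n k 2 := by
  rcases le_total n k with h | h
  · exact binomialSum_le_Theta_of_le h (by norm_num)
  obtain ⟨r, rfl⟩ := Nat.exists_eq_add_of_le' h
  obtain _ | c := k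
  · simpa using one_le_Theta (r + 0) 0 (by norm_num : 1 ≤ 2)
  have key := binomialSum.add_two_pow_le (r + 1) 1 c
  rw [binomialSum.one_right, show r + 1 + c = r + (c + 1) by omega,
    show 1 + c = c + 1 by omega] at key
  have key' : (binomialSum (r + (c + 1)) (c + 1) : ℝ) + 2 ^ (r + 1) ≤
      2 ^ (r + (c + 1)) + (r + 1 + 1) := by exact_mod_cast key
  have hmass := two_pow_add_mul_inv_pow r (c + 1)
  have := natCast_add_one_le_add_two_pow_mul_inv_pow r (c + 1)
  have hexpand : (2 : ℝ) ^ (r + (c + 1)) * (1 - 2⁻¹ ^ (c + 1)) ^ 2 =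
      2 ^ (r + (c + 1)) - 2 * 2 ^ r + 2 ^ r * 2⁻¹ ^ (c + 1) := by
    rw [← hmass]; ring
  rw [Theta, hexpand, geom_sum_two]
  push_cast at this ⊢
  linarith [pow_succ (2 : ℝ) r]

lemma Theta_add_Theta_le (n k : ℕ) {p : ℕ} (hp : 2 ≤ p) :
    Theta n (k + 1) p + Theta n k p ≤ Theta (n + 1) (k + 1) (p + 1) := by
  set x : ℝ := 1 - 2⁻¹ ^ (k + 1) with hx
  have hε : 1 - (2 : ℝ)⁻¹ ^ k = 2 * x - 1 := by rw [hx, pow_succ]; ring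
  have hx1 : x ≤ 1 := by rw [hx]; linarith [pow_nonneg (by norm_num : (0 : ℝ) ≤ 2⁻¹) (k + 1)]
  have hx0 : 0 ≤ 2 * x - 1 := by
    rw [← hε]
    linarith [pow_le_one₀ (by norm_num : (0 : ℝ) ≤ 2⁻¹) (by norm_num) (n := k)]
  have hgeom : ∑ j ∈ range p, (k : ℝ) ^ j ≤ ((k + 1 : ℕ) : ℝ) ^ p := by
    calc ∑ j ∈ range p, (k : ℝ) ^ j ≤ ∑ j ∈ range (p + 1), (k : ℝ) ^ j :=
          sum_le_sum_of_subset_of_nonneg (range_subset_range.2 (by omega))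
            fun _ _ _ => by positivity
      _ ≤ (1 + k) ^ p := geom_sum_le_one_add_pow (by positivity) p
      _ = ((k + 1 : ℕ) : ℝ) ^ p := by push_cast; ring
  have hpow := mul_le_mul_of_nonneg_left (two_mul_sub_one_pow_le hx0 hx1 hp)
    (by positivity : (0 : ℝ) ≤ 2 ^ n)
  have hsplit : (2 : ℝ) ^ (n + 1) * x ^ (p + 1) =
      2 ^ n * x ^ p + 2 ^ n * ((2 * x - 1) * x ^ p) := by
    ring
  simp only [Theta]
  rw [← hx, hε, sum_range_succ, hsplit]
  linarith

theorem binomialSum_le_Theta (n k : ℕ) {p : ℕ} (hp : 1 ≤ p) :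
    (binomialSum n k : ℝ) ≤ Theta n k p := by
  induction p, hp using Nat.le_induction generalizing n k with
  | base => exact binomialSum_le_Theta_one n k
  | succ p hp ih =>
    obtain rfl | hp2 := hp.eq_or_lt
    · exact binomialSum_le_Theta_two n k
    match n, k with
    | 0, k => simpa using one_le_Theta 0 k (by omega : 1 ≤ p + 1)
    | n, 0 => simpa using one_le_Theta n 0 (by omega : 1 ≤ p + 1)
    | n + 1, k + 1 =>
      calc (binomialSum (n + 1) (k + 1) : ℝ)
          = binomialSum n (k + 1) + binomialSum n k := by
            rw [binomialSum.succ_succ]; push_cast; rfl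
        _ ≤ Theta n (k + 1) p + Theta n k p := add_le_add (ih n (k + 1)) (ih n k)
        _ ≤ Theta (n + 1) (k + 1) (p + 1) := Theta_add_Theta_le n k hp2

theorem binomial_sum_le_Theta_phat_general (k n : ℕ) (hk : 2 ≤ k) :
    ((∑ i ∈ Finset.range (k + 1), n.choose i : ℕ) : ℝ) ≤
      ((k : ℝ) ^ (⌊((n : ℝ) - k) / Real.logb 2 ((k : ℝ) / (1 - (2 : ℝ)⁻¹ ^ k))⌋₊ + 1) - 1)
          / ((k : ℝ) - 1)
        + 2 ^ n * (1 - (2 : ℝ)⁻¹ ^ k)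
            ^ (⌊((n : ℝ) - k) / Real.logb 2 ((k : ℝ) / (1 - (2 : ℝ)⁻¹ ^ k))⌋₊ + 1) := by
  have hk1 : (k : ℝ) ≠ 1 := by norm_cast; omega
  rw [← geom_sum_eq hk1]
  exact binomialSum_le_Theta n k (Nat.succ_pos _)

/-- For all 2 ≤ k ≤ n, ∑_{i=0}^{k} C(n,i) ≤ (k^p̂ − 1)/(k − 1) + 2^n (1 − 2^{−k})^p̂,
where p̂ = ⌊(n − k)/log₂(k/(1 − 2^{−k}))⌋ + 1. -/
theorem binomial_sum_le_Theta_phat (k n : ℕ) (hk : 2 ≤ k) (hkn : k ≤ n) :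
    ((∑ i ∈ Finset.range (k + 1), n.choose i : ℕ) : ℝ) ≤
      ((k : ℝ) ^ (⌊((n : ℝ) - k) / Real.logb 2 ((k : ℝ) / (1 - (2 : ℝ)⁻¹ ^ k))⌋₊ + 1) - 1)
          / ((k : ℝ) - 1)
        + 2 ^ n * (1 - (2 : ℝ)⁻¹ ^ k)
            ^ (⌊((n : ℝ) - k) / Real.logb 2 ((k : ℝ) / (1 - (2 : ℝ)⁻¹ ^ k))⌋₊ + 1) :=
  binomial_sum_le_Theta_phat_general k n hk
end
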